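/- arXiv:1803.03519 — 9 statements merged into one kernel-verified Lean document; each statement's English description precedes it below -/
import Mathlib

section
/- For every n ≥ 0 one has the bounds 1 − √Λ₂ < L₁ < λ₁,ₙ ≤ 1 and 1 − √Λ₁ < L₂ < λ₂,ₙ ≤ 1 (in particular all λ₁,ₙ and λ₂,ₙ are positive, so the recursions never divide by zero). -/
/-!
Write `a = ρ₁/ρ` and `b = ρ₂/ρ`, so `Λ₁ = a²`, `Λ₂ = b²` and
`Λ = (1 - a - b)(1 + a + b)(1 - a + b)(1 + a - b) > 0`. The pair `(L₁, L₂)` is the fixed point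
of the map `(x, y) ↦ (1 - Λ₂/y, 1 - Λ₁/x)`, and this map is increasing in each variable, so it
sends the box `(L₁, 1] × (L₂, 1]` into itself; the sequence starts at `(1, 1)`, inside the box.
The bound `1 - b < L₁` comes from `Λ - (1 - 2b + b² - a²)² = 4b(1 - a - b)(1 + a - b) > 0`.
-/

open Real Set

noncomputable section

def lambdaDiscr (Λ₁ Λ₂ : ℝ) : ℝ := (Λ₁ - Λ₂) ^ 2 + 1 - 2 * (Λ₁ + Λ₂)

def lambdaLim (Λ₁ Λ₂ : ℝ) : ℝ := (1 + Λ₁ - Λ₂ + √(lambdaDiscr Λ₁ Λ₂)) / 2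

end

lemma lambdaDiscr_comm (Λ₁ Λ₂ : ℝ) : lambdaDiscr Λ₁ Λ₂ = lambdaDiscr Λ₂ Λ₁ := by
  unfold lambdaDiscr; ring

lemma lambdaDiscr_sq_sq (a b : ℝ) :
    lambdaDiscr (a ^ 2) (b ^ 2) = (1 - a - b) * (1 + a + b) * (1 - a + b) * (1 + a - b) := by
  unfold lambdaDiscr; ring

lemma lambdaDiscr_sq_sq_pos {a b : ℝ} (ha : 0 ≤ a) (hb : 0 ≤ b) (hab : a + b < 1) :
    0 < lambdaDiscr (a ^ 2) (b ^ 2) := by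
  rw [lambdaDiscr_sq_sq]
  have : 0 < 1 - a - b := by linarith
  have : 0 < 1 - a + b := by linarith
  have : 0 < 1 + a - b := by linarith
  positivity

lemma one_sub_div_lambdaLim {Λ₁ Λ₂ : ℝ} (hΛ : 0 ≤ lambdaDiscr Λ₁ Λ₂)
    (hL : lambdaLim Λ₂ Λ₁ ≠ 0) : 1 - Λ₂ / lambdaLim Λ₂ Λ₁ = lambdaLim Λ₁ Λ₂ := by
  have hsq : √(lambdaDiscr Λ₁ Λ₂) ^ 2 = lambdaDiscr Λ₁ Λ₂ := sq_sqrt hΛ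
  have hfix : Λ₂ = (1 - lambdaLim Λ₁ Λ₂) * lambdaLim Λ₂ Λ₁ := by
    unfold lambdaLim
    rw [lambdaDiscr_comm Λ₂ Λ₁]
    unfold lambdaDiscr at hsq ⊢
    linear_combination hsq / 4
  calc 1 - Λ₂ / lambdaLim Λ₂ Λ₁
      = 1 - (1 - lambdaLim Λ₁ Λ₂) * lambdaLim Λ₂ Λ₁ / lambdaLim Λ₂ Λ₁ := by rw [← hfix]
    _ = lambdaLim Λ₁ Λ₂ := by rw [mul_div_cancel_right₀ _ hL]; ring

lemma one_sub_lt_lambdaLim {a b : ℝ} (ha : 0 ≤ a) (hb : 0 < b) (hab : a + b < 1) :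
    1 - b < lambdaLim (a ^ 2) (b ^ 2) := by
  have hgap : lambdaDiscr (a ^ 2) (b ^ 2) - (1 - 2 * b + b ^ 2 - a ^ 2) ^ 2
      = 4 * b * (1 - a - b) * (1 + a - b) := by
    unfold lambdaDiscr; ring
  have hpos : 0 < 4 * b * (1 - a - b) * (1 + a - b) := by
    have : 0 < 1 - a - b := by linarith
    have : 0 < 1 + a - b := by linarith
    positivity
  have := lt_sqrt_of_sq_lt (x := 1 - 2 * b + b ^ 2 - a ^ 2) (by linarith)
  unfold lambdaLim
  linarith

lemma one_sub_div_mem_Ioc {c L y : ℝ} (hc : 0 < c) (hL : 0 < L) (hy : y ∈ Ioc L 1) :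
    1 - c / y ∈ Ioc (1 - c / L) 1 := by
  have hy₀ : 0 < y := hL.trans hy.1
  exact ⟨by gcongr; exact hy.1, by linarith [div_pos hc hy₀]⟩

lemma coupled_recursion_mem_Ioc {c₁ c₂ L₁ L₂ : ℝ} {l₁ l₂ : ℕ → ℝ}
    (hc₁ : 0 < c₁) (hc₂ : 0 < c₂) (hL₁ : 0 < L₁) (hL₂ : 0 < L₂)
    (hfix₁ : 1 - c₂ / L₂ = L₁) (hfix₂ : 1 - c₁ / L₁ = L₂)
    (hl₁0 : l₁ 0 = 1) (hl₂0 : l₂ 0 = 1)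
    (hl₁ : ∀ n, l₁ (n + 1) = 1 - c₂ / l₂ n) (hl₂ : ∀ n, l₂ (n + 1) = 1 - c₁ / l₁ n) :
    ∀ n, l₁ n ∈ Ioc L₁ 1 ∧ l₂ n ∈ Ioc L₂ 1
  | 0 => by
    have h₁ : L₁ < 1 := by rw [← hfix₁]; linarith [div_pos hc₂ hL₂]
    have h₂ : L₂ < 1 := by rw [← hfix₂]; linarith [div_pos hc₁ hL₁]
    rw [hl₁0, hl₂0]
    exact ⟨⟨h₁, le_rfl⟩, ⟨h₂, le_rfl⟩⟩
  | n + 1 => by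
    obtain ⟨ih₁, ih₂⟩ := coupled_recursion_mem_Ioc hc₁ hc₂ hL₁ hL₂ hfix₁ hfix₂ hl₁0 hl₂0 hl₁ hl₂ n
    rw [hl₁, hl₂]
    exact ⟨hfix₁ ▸ one_sub_div_mem_Ioc hc₂ hL₂ ih₂, hfix₂ ▸ one_sub_div_mem_Ioc hc₁ hL₁ ih₁⟩

theorem lambda_seq_bounds
    (ρ ρ₁ ρ₂ : ℝ) (hρ₁ : 0 < ρ₁) (hρ₂ : 0 < ρ₂) (hsum : ρ₁ + ρ₂ < ρ)
    (Λ₁ Λ₂ Λ : ℝ) (hΛ₁ : Λ₁ = (ρ₁ / ρ) ^ 2) (hΛ₂ : Λ₂ = (ρ₂ / ρ) ^ 2)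
    (hΛ : Λ = (Λ₁ - Λ₂) ^ 2 + 1 - 2 * (Λ₁ + Λ₂))
    (l₁ l₂ : ℕ → ℝ) (hl₁0 : l₁ 0 = 1) (hl₂0 : l₂ 0 = 1)
    (hl₁ : ∀ n : ℕ, l₁ (n + 1) = 1 - Λ₂ / l₂ n)
    (hl₂ : ∀ n : ℕ, l₂ (n + 1) = 1 - Λ₁ / l₁ n)
    (L₁ L₂ : ℝ)
    (hL₁ : L₁ = (1 + Λ₁ - Λ₂ + Real.sqrt Λ) / 2)
    (hL₂ : L₂ = (1 + Λ₂ - Λ₁ + Real.sqrt Λ) / 2) :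
    ∀ n : ℕ,
      (1 - Real.sqrt Λ₂ < L₁ ∧ L₁ < l₁ n ∧ l₁ n ≤ 1) ∧
      (1 - Real.sqrt Λ₁ < L₂ ∧ L₂ < l₂ n ∧ l₂ n ≤ 1) := by
  have hρ : 0 < ρ := by linarith
  have ha : 0 < ρ₁ / ρ := div_pos hρ₁ hρ
  have hb : 0 < ρ₂ / ρ := div_pos hρ₂ hρ
  have hab : ρ₁ / ρ + ρ₂ / ρ < 1 := by rwa [← add_div, div_lt_one hρ]
  generalize ρ₁ / ρ = a at *
  generalize ρ₂ / ρ = b at *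
  subst hΛ₁ hΛ₂ hΛ hL₁ hL₂
  rw [sqrt_sq ha.le, sqrt_sq hb.le]
  have hΛ : 0 < lambdaDiscr (a ^ 2) (b ^ 2) := lambdaDiscr_sq_sq_pos ha.le hb.le hab
  have hL₁ : 1 - b < lambdaLim (a ^ 2) (b ^ 2) := one_sub_lt_lambdaLim ha.le hb hab
  have hL₂ : 1 - a < lambdaLim (b ^ 2) (a ^ 2) :=
    one_sub_lt_lambdaLim hb.le ha (by linarith)
  have hbox := coupled_recursion_mem_Ioc (pow_pos ha 2) (pow_pos hb 2)
    (by linarith) (by linarith) (one_sub_div_lambdaLim hΛ.le (by linarith))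
    (one_sub_div_lambdaLim (lambdaDiscr_comm _ _ ▸ hΛ.le) (by linarith)) hl₁0 hl₂0 hl₁ hl₂
  have hL₂_eq : lambdaLim (b ^ 2) (a ^ 2)
      = (1 + b ^ 2 - a ^ 2 + √(lambdaDiscr (a ^ 2) (b ^ 2))) / 2 := by
    rw [lambdaLim, lambdaDiscr_comm]
  intro n
  obtain ⟨⟨h₁, h₁'⟩, ⟨h₂, h₂'⟩⟩ := hbox n
  rw [hL₂_eq] at hL₂ h₂
  exact ⟨⟨hL₁, h₁, h₁'⟩, ⟨hL₂, h₂, h₂'⟩⟩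
end

section
/- The sequences (λ₁,ₙ) and (λ₂,ₙ) are convergent, with limₙ→∞ λ₁,ₙ = L₁ = (1 + Λ₁ − Λ₂ + √Λ)/2 and limₙ→∞ λ₂,ₙ = L₂ = (1 + Λ₂ − Λ₁ + √Λ)/2. -/
/-!
Write `a = Λ₁`, `b = Λ₂`. The pair `(λ₁,ₙ, λ₂,ₙ)` is the orbit of `(1, 1)` under
`T (x, y) = (1 - b / y, 1 - a / x)`, which is monotone on the positive quadrant. The point
`(L₁, L₂)` is a fixed point of `T` below `(1, 1)`, and `T (1, 1) ≤ (1, 1)`, so the orbit decreases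
and stays above `(L₁, L₂)`; its limit is again a fixed point. Eliminating `y` from the fixed point
equations gives `(2x - (1 + a - b))² = Λ`, so every positive fixed point has `x ≤ L₁` (and
symmetrically `y ≤ L₂`): the limit is `(L₁, L₂)`.
-/

open Filter Topology

/-- The quantity `Λ` of the statement, as a function of `Λ₁` and `Λ₂`. -/
def recDisc (a b : ℝ) : ℝ := (a - b) ^ 2 + 1 - 2 * (a + b)

/-- `limFst Λ₁ Λ₂ = L₁` and `limFst Λ₂ Λ₁ = L₂`. -/
noncomputable def limFst (a b : ℝ) : ℝ := (1 + a - b + √(recDisc a b)) / 2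

lemma recDisc_comm (a b : ℝ) : recDisc a b = recDisc b a := by
  unfold recDisc; ring

lemma recDisc_sq_sq_nonneg {α β : ℝ} (hα : 0 ≤ α) (hβ : 0 ≤ β) (hαβ : α + β ≤ 1) :
    0 ≤ recDisc (α ^ 2) (β ^ 2) := by
  have hfactor : recDisc (α ^ 2) (β ^ 2) = (1 - (α + β) ^ 2) * (1 - (α - β) ^ 2) := by
    unfold recDisc; ring
  rw [hfactor]
  apply mul_nonneg <;> nlinarith

lemma limFst_pos {a b : ℝ} (h : b < 1 + a) : 0 < limFst a b := by
  unfold limFst; linarith [Real.sqrt_nonneg (recDisc a b)]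

lemma limFst_le_one {a b : ℝ} (hb : 0 ≤ b) (h : a ≤ 1 + b) : limFst a b ≤ 1 := by
  have : √(recDisc a b) ≤ 1 - a + b :=
    Real.sqrt_le_iff.2 ⟨by linarith, by unfold recDisc; nlinarith⟩
  unfold limFst; linarith

lemma limFst_mul_limFst {a b : ℝ} (hd : 0 ≤ recDisc a b) :
    limFst a b * limFst b a = limFst b a - b := by
  have hs := Real.sq_sqrt hd
  unfold limFst
  rw [recDisc_comm b a]
  unfold recDisc at hs ⊢
  linear_combination hs / 4

lemma eq_one_sub_div_iff {p q b : ℝ} (hq : q ≠ 0) : p = 1 - b / q ↔ p * q = q - b := by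
  field_simp

lemma le_limFst_of_fixedPt {a b u v : ℝ} (hu : u ≠ 0) (hv : v ≠ 0)
    (huv : u = 1 - b / v) (hvu : v = 1 - a / u) : u ≤ limFst a b := by
  have h₁ := (eq_one_sub_div_iff hv).1 huv
  have h₂ := (eq_one_sub_div_iff hu).1 hvu
  have hsq : (2 * u - (1 + a - b)) ^ 2 = recDisc a b := by
    unfold recDisc; linear_combination 4 * h₂ + 4 * u * (h₁ - h₂)
  have := (le_abs_self _).trans (Real.abs_le_sqrt hsq.le)
  unfold limFst; linarith

lemma eq_one_sub_div_of_tendsto {b M N : ℝ} {u v : ℕ → ℝ} (hu : Tendsto u atTop (𝓝 M))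
    (hv : Tendsto v atTop (𝓝 N)) (hN : N ≠ 0) (huv : ∀ n, u (n + 1) = 1 - b / v n) :
    M = 1 - b / N :=
  tendsto_nhds_unique ((tendsto_add_atTop_iff_nat 1).2 hu)
    ((tendsto_const_nhds.sub (tendsto_const_nhds.div hv hN)).congr fun n => (huv n).symm)

section Recurrence

variable {a b p q : ℝ} {x y : ℕ → ℝ}

lemma fixedPt_le_recurrence (ha : 0 ≤ a) (hb : 0 ≤ b) (hp : 0 < p) (hq : 0 < q)
    (hp1 : p ≤ 1) (hq1 : q ≤ 1) (hpq : p = 1 - b / q) (hqp : q = 1 - a / p)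
    (hx0 : x 0 = 1) (hy0 : y 0 = 1)
    (hx : ∀ n, x (n + 1) = 1 - b / y n) (hy : ∀ n, y (n + 1) = 1 - a / x n) (n : ℕ) :
    p ≤ x n ∧ q ≤ y n := by
  induction n with
  | zero => exact ⟨hx0 ▸ hp1, hy0 ▸ hq1⟩
  | succ n ih =>
    constructor
    · rw [hx, hpq]; gcongr; exact ih.2
    · rw [hy, hqp]; gcongr; exact ih.1

lemma recurrence_antitone (ha : 0 ≤ a) (hb : 0 ≤ b) (hxpos : ∀ n, 0 < x n)
    (hypos : ∀ n, 0 < y n) (hx0 : x 0 = 1) (hy0 : y 0 = 1)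
    (hx : ∀ n, x (n + 1) = 1 - b / y n) (hy : ∀ n, y (n + 1) = 1 - a / x n) :
    Antitone x ∧ Antitone y := by
  have hstep : ∀ n, x (n + 1) ≤ x n ∧ y (n + 1) ≤ y n := by
    intro n
    induction n with
    | zero =>
      rw [hx, hy, hx0, hy0, div_one, div_one]
      constructor <;> linarith
    | succ n ih =>
      constructor
      · rw [hx (n + 1), hx n]; gcongr; exacts [hypos _, ih.2]
      · rw [hy (n + 1), hy n]; gcongr; exacts [hxpos _, ih.1]
  exact ⟨antitone_nat_of_succ_le fun n => (hstep n).1,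
    antitone_nat_of_succ_le fun n => (hstep n).2⟩

lemma exists_tendsto_recurrence (ha : 0 ≤ a) (hb : 0 ≤ b) (hp : 0 < p) (hq : 0 < q)
    (hp1 : p ≤ 1) (hq1 : q ≤ 1) (hpq : p = 1 - b / q) (hqp : q = 1 - a / p)
    (hx0 : x 0 = 1) (hy0 : y 0 = 1)
    (hx : ∀ n, x (n + 1) = 1 - b / y n) (hy : ∀ n, y (n + 1) = 1 - a / x n) :
    ∃ M N, p ≤ M ∧ q ≤ N ∧ M = 1 - b / N ∧ N = 1 - a / M ∧
      Tendsto x atTop (𝓝 M) ∧ Tendsto y atTop (𝓝 N) := by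
  have hbound := fixedPt_le_recurrence ha hb hp hq hp1 hq1 hpq hqp hx0 hy0 hx hy
  obtain ⟨hxanti, hyanti⟩ := recurrence_antitone ha hb (fun n => hp.trans_le (hbound n).1)
    (fun n => hq.trans_le (hbound n).2) hx0 hy0 hx hy
  have hxlim := tendsto_atTop_ciInf hxanti ⟨p, Set.forall_mem_range.2 fun n => (hbound n).1⟩
  have hylim := tendsto_atTop_ciInf hyanti ⟨q, Set.forall_mem_range.2 fun n => (hbound n).2⟩
  have hpM : p ≤ ⨅ n, x n := le_ciInf fun n => (hbound n).1
  have hqN : q ≤ ⨅ n, y n := le_ciInf fun n => (hbound n).2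
  exact ⟨_, _, hpM, hqN, eq_one_sub_div_of_tendsto hxlim hylim (hq.trans_le hqN).ne' hx,
    eq_one_sub_div_of_tendsto hylim hxlim (hp.trans_le hpM).ne' hy, hxlim, hylim⟩

theorem tendsto_limFst_recurrence (ha : 0 ≤ a) (hb : 0 ≤ b) (ha1 : a < 1) (hb1 : b < 1)
    (hd : 0 ≤ recDisc a b) (hx0 : x 0 = 1) (hy0 : y 0 = 1)
    (hx : ∀ n, x (n + 1) = 1 - b / y n) (hy : ∀ n, y (n + 1) = 1 - a / x n) :
    Tendsto x atTop (𝓝 (limFst a b)) ∧ Tendsto y atTop (𝓝 (limFst b a)) := by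
  have hp := limFst_pos (a := a) (b := b) (by linarith)
  have hq := limFst_pos (a := b) (b := a) (by linarith)
  have hpq := (eq_one_sub_div_iff hq.ne').2 (limFst_mul_limFst hd)
  have hqp := (eq_one_sub_div_iff hp.ne').2 (limFst_mul_limFst (recDisc_comm a b ▸ hd))
  obtain ⟨M, N, hpM, hqN, hMN, hNM, hxlim, hylim⟩ := exists_tendsto_recurrence ha hb hp hq
    (limFst_le_one hb (by linarith)) (limFst_le_one ha (by linarith)) hpq hqp hx0 hy0 hx hy
  have hM : M ≠ 0 := (hp.trans_le hpM).ne'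
  have hN : N ≠ 0 := (hq.trans_le hqN).ne'
  rw [← le_antisymm (le_limFst_of_fixedPt hM hN hMN hNM) hpM,
    ← le_antisymm (le_limFst_of_fixedPt hN hM hNM hMN) hqN]
  exact ⟨hxlim, hylim⟩

end Recurrence

theorem lambda_seq_convergence
    (ρ ρ₁ ρ₂ : ℝ) (hρ₁ : 0 < ρ₁) (hρ₂ : 0 < ρ₂) (hsum : ρ₁ + ρ₂ < ρ)
    (Λ₁ Λ₂ Λ : ℝ) (hΛ₁ : Λ₁ = (ρ₁ / ρ) ^ 2) (hΛ₂ : Λ₂ = (ρ₂ / ρ) ^ 2)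
    (hΛ : Λ = (Λ₁ - Λ₂) ^ 2 + 1 - 2 * (Λ₁ + Λ₂))
    (l₁ l₂ : ℕ → ℝ) (hl₁0 : l₁ 0 = 1) (hl₂0 : l₂ 0 = 1)
    (hl₁ : ∀ n : ℕ, l₁ (n + 1) = 1 - Λ₂ / l₂ n)
    (hl₂ : ∀ n : ℕ, l₂ (n + 1) = 1 - Λ₁ / l₁ n)
    (L₁ L₂ : ℝ)
    (hL₁ : L₁ = (1 + Λ₁ - Λ₂ + Real.sqrt Λ) / 2)
    (hL₂ : L₂ = (1 + Λ₂ - Λ₁ + Real.sqrt Λ) / 2) :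
    Filter.Tendsto l₁ Filter.atTop (nhds L₁) ∧
    Filter.Tendsto l₂ Filter.atTop (nhds L₂) := by
  have hρ : 0 < ρ := by linarith
  have hα : 0 < ρ₁ / ρ := div_pos hρ₁ hρ
  have hβ : 0 < ρ₂ / ρ := div_pos hρ₂ hρ
  have hαβ : ρ₁ / ρ + ρ₂ / ρ < 1 := by rwa [← add_div, div_lt_one hρ]
  have hΛdisc : Λ = recDisc Λ₁ Λ₂ := hΛ
  have hL₁' : L₁ = limFst Λ₁ Λ₂ := by rw [hL₁, hΛdisc]; rfl
  have hL₂' : L₂ = limFst Λ₂ Λ₁ := by rw [hL₂, hΛdisc, recDisc_comm]; rfl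
  subst hΛ₁ hΛ₂ hL₁' hL₂'
  exact tendsto_limFst_recurrence (by positivity) (by positivity)
    (pow_lt_one₀ hα.le (by linarith) two_ne_zero) (pow_lt_one₀ hβ.le (by linarith) two_ne_zero)
    (recDisc_sq_sq_nonneg hα.le hβ.le hαβ.le) hl₁0 hl₂0 hl₁ hl₂
end

section
/- There exist a constant C > 0 and a constant δ with 0 < δ < 1 such that |κ₁,ₙ| + |κ₂,ₙ| ≤ C·δⁿ for all n ≥ 1. -/
/-!
Write `a = ρ₁ / ρ` and `b = ρ₂ / ρ`, so `Λ₁ = a²`, `Λ₂ = b²` and `a + b < 1`. Since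
`b² / (1 - a) ≤ b`, the continued fractions stay bounded below: `λ₁,ₙ ≥ 1 - b` and
`λ₂,ₙ ≥ 1 - a`. Hence the factor in the two-step recursions of `κ₁, κ₂` is at most `δ²` with
`δ = ab / ((1 - a)(1 - b))`, and `δ < 1` because `(1 - a)(1 - b) - ab = 1 - a - b > 0`.
-/

section TwoStepDecay

variable {E : Type*} [SeminormedAddGroup E]

theorem norm_le_of_norm_add_two_le {κ : ℕ → E} {δ : ℝ} (hδ : 0 < δ)
    (hrec : ∀ n, 1 ≤ n → ‖κ (n + 2)‖ ≤ δ ^ 2 * ‖κ n‖) (n : ℕ) (hn : 1 ≤ n) :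
    ‖κ n‖ ≤ max (‖κ 1‖ / δ) (‖κ 2‖ / δ ^ 2) * δ ^ n := by
  set M := max (‖κ 1‖ / δ) (‖κ 2‖ / δ ^ 2)
  have hpair : ∀ k, ‖κ (k + 1)‖ ≤ M * δ ^ (k + 1) ∧ ‖κ (k + 2)‖ ≤ M * δ ^ (k + 2) := by
    intro k
    induction k with
    | zero =>
      constructor
      · calc ‖κ 1‖ = ‖κ 1‖ / δ * δ ^ 1 := by field_simp
          _ ≤ M * δ ^ (0 + 1) := by gcongr; exact le_max_left _ _
      · calc ‖κ 2‖ = ‖κ 2‖ / δ ^ 2 * δ ^ 2 := by field_simp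
          _ ≤ M * δ ^ (0 + 2) := by gcongr; exact le_max_right _ _
    | succ k ih =>
      refine ⟨ih.2, ?_⟩
      calc ‖κ (k + 1 + 2)‖ ≤ δ ^ 2 * ‖κ (k + 1)‖ := hrec (k + 1) (by omega)
        _ ≤ δ ^ 2 * (M * δ ^ (k + 1)) := by gcongr; exact ih.1
        _ = M * δ ^ (k + 1 + 2) := by ring
  obtain ⟨k, rfl⟩ := Nat.exists_eq_add_of_le' hn
  exact (hpair k).1

end TwoStepDecay

theorem one_sub_le_one_sub_sq_div {b c x : ℝ} (hb : 0 ≤ b) (hbc : b ≤ c) (hc : 0 < c)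
    (hcx : c ≤ x) : 1 - b ≤ 1 - b ^ 2 / x := by
  have : b ^ 2 / x ≤ b :=
    calc b ^ 2 / x ≤ b ^ 2 / c := by gcongr
      _ ≤ b := by rw [div_le_iff₀ hc]; nlinarith
  linarith

theorem continuedFraction_lower_bounds {a b : ℝ} (ha : 0 ≤ a) (hb : 0 ≤ b) (hab : a + b < 1)
    {l₁ l₂ : ℕ → ℝ} (hl₁0 : l₁ 0 = 1) (hl₂0 : l₂ 0 = 1)
    (hl₁ : ∀ n, l₁ (n + 1) = 1 - b ^ 2 / l₂ n) (hl₂ : ∀ n, l₂ (n + 1) = 1 - a ^ 2 / l₁ n)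
    (n : ℕ) : 1 - b ≤ l₁ n ∧ 1 - a ≤ l₂ n := by
  induction n with
  | zero => rw [hl₁0, hl₂0]; constructor <;> linarith
  | succ n ih =>
    rw [hl₁, hl₂]
    exact ⟨one_sub_le_one_sub_sq_div hb (by linarith) (by linarith) ih.2,
      one_sub_le_one_sub_sq_div ha (by linarith) (by linarith) ih.1⟩

noncomputable def decayRate (a b : ℝ) : ℝ := a * b / ((1 - a) * (1 - b))

section DecayRate

variable {a b : ℝ}

theorem decayRate_pos (ha : 0 < a) (hb : 0 < b) (hab : a + b < 1) : 0 < decayRate a b := by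
  have : 0 < 1 - a := by linarith
  have : 0 < 1 - b := by linarith
  unfold decayRate; positivity

theorem decayRate_lt_one (ha : 0 ≤ a) (hb : 0 ≤ b) (hab : a + b < 1) : decayRate a b < 1 := by
  rw [decayRate, div_lt_one (by nlinarith)]
  nlinarith

theorem norm_le_decayRate_sq_mul (ha : a < 1) (hb : b < 1) {t : ℝ}
    (ht : (1 - a) * (1 - b) ≤ t) {z w : ℂ} (h : w = ((a ^ 2 * b ^ 2 / t ^ 2 : ℝ) : ℂ) * z) :
    ‖w‖ ≤ decayRate a b ^ 2 * ‖z‖ := by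
  have h0 : 0 < (1 - a) * (1 - b) := mul_pos (by linarith) (by linarith)
  have hfactor : a ^ 2 * b ^ 2 / t ^ 2 ≤ decayRate a b ^ 2 := by
    rw [decayRate, div_pow, mul_pow]
    exact div_le_div_of_nonneg_left (by positivity) (by positivity)
      (pow_le_pow_left₀ h0.le ht 2)
  rw [h, norm_mul, Complex.norm_real, Real.norm_of_nonneg (by positivity)]
  gcongr

end DecayRate

theorem kappa_geometric_decay_general
    (ρ ρ₁ ρ₂ : ℝ)
    (hρ₁ : 0 < ρ₁) (hρ₂ : 0 < ρ₂) (hsum : ρ₁ + ρ₂ < ρ)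
    (Λ₁ Λ₂ : ℝ) (hΛ₁ : Λ₁ = (ρ₁ / ρ) ^ 2) (hΛ₂ : Λ₂ = (ρ₂ / ρ) ^ 2)
    (l₁ l₂ : ℕ → ℝ) (hl₁0 : l₁ 0 = 1) (hl₂0 : l₂ 0 = 1)
    (hl₁ : ∀ n : ℕ, l₁ (n + 1) = 1 - Λ₂ / l₂ n)
    (hl₂ : ∀ n : ℕ, l₂ (n + 1) = 1 - Λ₁ / l₁ n)
    (κ₁ κ₂ : ℕ → ℂ)
    (hκ₁rec : ∀ n : ℕ, 1 ≤ n →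
      κ₁ (n + 2) = ((Λ₁ * Λ₂ / (l₂ n * l₁ (n - 1)) ^ 2 : ℝ) : ℂ) * κ₁ n)
    (hκ₂rec : ∀ n : ℕ, 1 ≤ n →
      κ₂ (n + 2) = ((Λ₁ * Λ₂ / (l₁ n * l₂ (n - 1)) ^ 2 : ℝ) : ℂ) * κ₂ n) :
    ∃ C : ℝ, 0 < C ∧ ∃ δ : ℝ, 0 < δ ∧ δ < 1 ∧
      ∀ n : ℕ, 1 ≤ n → ‖κ₁ n‖ + ‖κ₂ n‖ ≤ C * δ ^ n := by
  subst hΛ₁ hΛ₂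
  have hρpos : 0 < ρ := by linarith
  set a := ρ₁ / ρ
  set b := ρ₂ / ρ
  have ha : 0 < a := by positivity
  have hb : 0 < b := by positivity
  have hab : a + b < 1 := by rw [← add_div, div_lt_one hρpos]; exact hsum
  have hl := continuedFraction_lower_bounds ha.le hb.le hab hl₁0 hl₂0 hl₁ hl₂
  have h1a : 0 ≤ 1 - a := by linarith
  have h1b : 0 ≤ 1 - b := by linarith
  have hδ := decayRate_pos ha hb hab
  have hκ₁ := norm_le_of_norm_add_two_le hδ fun n hn =>
    norm_le_decayRate_sq_mul (by linarith) (by linarith)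
      (mul_le_mul (hl n).2 (hl (n - 1)).1 h1b (h1a.trans (hl n).2)) (hκ₁rec n hn)
  have hκ₂ := norm_le_of_norm_add_two_le hδ fun n hn =>
    norm_le_decayRate_sq_mul (by linarith) (by linarith)
      ((mul_comm _ _).trans_le (mul_le_mul (hl n).1 (hl (n - 1)).2 h1a (h1b.trans (hl n).1)))
      (hκ₂rec n hn)
  set δ := decayRate a b
  set M₁ := max (‖κ₁ 1‖ / δ) (‖κ₁ 2‖ / δ ^ 2)
  set M₂ := max (‖κ₂ 1‖ / δ) (‖κ₂ 2‖ / δ ^ 2)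
  have hM₁ : 0 ≤ M₁ := le_max_of_le_left (by positivity)
  have hM₂ : 0 ≤ M₂ := le_max_of_le_left (by positivity)
  refine ⟨M₁ + M₂ + 1, by positivity, δ, hδ, decayRate_lt_one ha.le hb.le hab, fun n hn => ?_⟩
  calc ‖κ₁ n‖ + ‖κ₂ n‖ ≤ (M₁ + M₂) * δ ^ n := by linarith [hκ₁ n hn, hκ₂ n hn]
    _ ≤ (M₁ + M₂ + 1) * δ ^ n := mul_le_mul_of_nonneg_right (by linarith) (by positivity)

theorem kappa_geometric_decay
    (z₁ z₂ : ℂ) (hz : z₁ ≠ z₂) (ρ ρ₁ ρ₂ : ℝ)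
    (hρ : ρ = ‖z₁ - z₂‖)
    (hρ₁ : 0 < ρ₁) (hρ₂ : 0 < ρ₂) (hsum : ρ₁ + ρ₂ < ρ)
    (Λ₁ Λ₂ Λ : ℝ) (hΛ₁ : Λ₁ = (ρ₁ / ρ) ^ 2) (hΛ₂ : Λ₂ = (ρ₂ / ρ) ^ 2)
    (hΛ : Λ = (Λ₁ - Λ₂) ^ 2 + 1 - 2 * (Λ₁ + Λ₂))
    (l₁ l₂ : ℕ → ℝ) (hl₁0 : l₁ 0 = 1) (hl₂0 : l₂ 0 = 1)
    (hl₁ : ∀ n : ℕ, l₁ (n + 1) = 1 - Λ₂ / l₂ n)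
    (hl₂ : ∀ n : ℕ, l₂ (n + 1) = 1 - Λ₁ / l₁ n)
    (κ₁ κ₂ : ℕ → ℂ)
    (hκ₁1 : κ₁ 1 = ((2 * ρ₂ ^ 2 : ℝ) : ℂ))
    (hκ₁2 : κ₁ 2 = -(2 * (((ρ₁ * ρ₂ : ℝ)) : ℂ) ^ 2) / (starRingEnd ℂ (z₂ - z₁)) ^ 2)
    (hκ₁rec : ∀ n : ℕ, 1 ≤ n →
      κ₁ (n + 2) = ((Λ₁ * Λ₂ / (l₂ n * l₁ (n - 1)) ^ 2 : ℝ) : ℂ) * κ₁ n)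
    (hκ₂1 : κ₂ 1 = ((2 * ρ₁ ^ 2 : ℝ) : ℂ))
    (hκ₂2 : κ₂ 2 = -(2 * (((ρ₁ * ρ₂ : ℝ)) : ℂ) ^ 2) / (starRingEnd ℂ (z₁ - z₂)) ^ 2)
    (hκ₂rec : ∀ n : ℕ, 1 ≤ n →
      κ₂ (n + 2) = ((Λ₁ * Λ₂ / (l₁ n * l₂ (n - 1)) ^ 2 : ℝ) : ℂ) * κ₂ n) :
    ∃ C : ℝ, 0 < C ∧ ∃ δ : ℝ, 0 < δ ∧ δ < 1 ∧
      ∀ n : ℕ, 1 ≤ n → ‖κ₁ n‖ + ‖κ₂ n‖ ≤ C * δ ^ n :=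
  kappa_geometric_decay_general ρ ρ₁ ρ₂ hρ₁ hρ₂ hsum Λ₁ Λ₂ hΛ₁ hΛ₂ l₁ l₂ hl₁0 hl₂0 hl₁ hl₂ κ₁ κ₂
    hκ₁rec hκ₂rec
end

section
/- For every n ≥ 1 one has κ₂,ₙ₊₁ = −(ρ₁²/((conj(z₁ − z₂))² λ₁,ₙ₋₁²))·conj(κ₁,ₙ) and κ₁,ₙ₊₁ = −(ρ₂²/((conj(z₂ − z₁))² λ₂,ₙ₋₁²))·conj(κ₂,ₙ). -/
/-!
Substituting the relation for `κ₁,ₙ₊₁` into the one for `κ₂,ₙ₊₂` multiplies `κ₂,ₙ` by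
`ρ₁² ρ₂² / (conj w² w² (λ₁,ₙ λ₂,ₙ₋₁)²)` with `w = z₁ - z₂`. Since `conj w² w² = ‖w‖⁴ = ρ⁴`, this is
the real factor `Λ₁ Λ₂ / (λ₁,ₙ λ₂,ₙ₋₁)²` of the two-step recurrence, and symmetrically for `κ₁`.
So the relations pass from `n` to `n + 1`; at `n = 1` they are the formulas for `κ₁,₂` and `κ₂,₂`.
-/

open ComplexConjugate

lemma conj_sq_mul_sq (w : ℂ) : conj w ^ 2 * w ^ 2 = ((‖w‖ ^ 4 : ℝ) : ℂ) := by
  rw [← mul_pow, Complex.conj_mul']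
  push_cast
  ring

lemma cross_relation_comp (z₁ z₂ κ : ℂ) (r s a b : ℝ) :
    -(((r ^ 2 : ℝ) : ℂ) / (conj (z₁ - z₂) ^ 2 * (a : ℂ) ^ 2)) *
        conj (-(((s ^ 2 : ℝ) : ℂ) / (conj (z₂ - z₁) ^ 2 * (b : ℂ) ^ 2)) * conj κ) =
      (((r / ‖z₁ - z₂‖) ^ 2 * (s / ‖z₁ - z₂‖) ^ 2 / (a * b) ^ 2 : ℝ) : ℂ) * κ := by
  have hsq : (z₂ - z₁) ^ 2 = (z₁ - z₂) ^ 2 := by ring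
  simp only [map_mul, map_neg, map_div₀, map_pow, Complex.conj_conj, Complex.conj_ofReal, hsq]
  rw [← mul_assoc, neg_mul_neg, div_mul_div_comm, mul_mul_mul_comm, conj_sq_mul_sq]
  push_cast
  ring

theorem kappa_cross_relations_general
    (z₁ z₂ : ℂ) (ρ ρ₁ ρ₂ : ℝ)
    (hρ : ρ = ‖z₁ - z₂‖)
    (Λ₁ Λ₂ : ℝ) (hΛ₁ : Λ₁ = (ρ₁ / ρ) ^ 2) (hΛ₂ : Λ₂ = (ρ₂ / ρ) ^ 2)
    (l₁ l₂ : ℕ → ℝ) (hl₁0 : l₁ 0 = 1) (hl₂0 : l₂ 0 = 1)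
    (κ₁ κ₂ : ℕ → ℂ)
    (hκ₁1 : κ₁ 1 = ((2 * ρ₂ ^ 2 : ℝ) : ℂ))
    (hκ₁2 : κ₁ 2 = -(2 * (((ρ₁ * ρ₂ : ℝ)) : ℂ) ^ 2) / (starRingEnd ℂ (z₂ - z₁)) ^ 2)
    (hκ₁rec : ∀ n : ℕ, 1 ≤ n →
      κ₁ (n + 2) = ((Λ₁ * Λ₂ / (l₂ n * l₁ (n - 1)) ^ 2 : ℝ) : ℂ) * κ₁ n)
    (hκ₂1 : κ₂ 1 = ((2 * ρ₁ ^ 2 : ℝ) : ℂ))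
    (hκ₂2 : κ₂ 2 = -(2 * (((ρ₁ * ρ₂ : ℝ)) : ℂ) ^ 2) / (starRingEnd ℂ (z₁ - z₂)) ^ 2)
    (hκ₂rec : ∀ n : ℕ, 1 ≤ n →
      κ₂ (n + 2) = ((Λ₁ * Λ₂ / (l₁ n * l₂ (n - 1)) ^ 2 : ℝ) : ℂ) * κ₂ n) :
    ∀ n : ℕ, 1 ≤ n →
      κ₂ (n + 1) = -(((ρ₁ ^ 2 : ℝ) : ℂ) / ((starRingEnd ℂ (z₁ - z₂)) ^ 2 * ((l₁ (n - 1) : ℝ) : ℂ) ^ 2)) *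
          starRingEnd ℂ (κ₁ n) ∧
      κ₁ (n + 1) = -(((ρ₂ ^ 2 : ℝ) : ℂ) / ((starRingEnd ℂ (z₂ - z₁)) ^ 2 * ((l₂ (n - 1) : ℝ) : ℂ) ^ 2)) *
          starRingEnd ℂ (κ₂ n) := by
  intro n hn
  induction n, hn using Nat.le_induction with
  | base =>
    simp only [Nat.sub_self, hl₁0, hl₂0, hκ₁1, hκ₁2, hκ₂1, hκ₂2, Complex.conj_ofReal]
    push_cast
    constructor <;> ring
  | succ n hn ih =>
    rw [Nat.add_sub_cancel, hκ₂rec n hn, hκ₁rec n hn, ih.1, ih.2, cross_relation_comp,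
      cross_relation_comp, norm_sub_rev z₂, ← hρ, hΛ₁, hΛ₂, mul_comm ((ρ₁ / ρ) ^ 2)]
    exact ⟨rfl, rfl⟩

theorem kappa_cross_relations
    (z₁ z₂ : ℂ) (hz : z₁ ≠ z₂) (ρ ρ₁ ρ₂ : ℝ)
    (hρ : ρ = ‖z₁ - z₂‖)
    (hρ₁ : 0 < ρ₁) (hρ₂ : 0 < ρ₂) (hsum : ρ₁ + ρ₂ < ρ)
    (Λ₁ Λ₂ Λ : ℝ) (hΛ₁ : Λ₁ = (ρ₁ / ρ) ^ 2) (hΛ₂ : Λ₂ = (ρ₂ / ρ) ^ 2)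
    (hΛ : Λ = (Λ₁ - Λ₂) ^ 2 + 1 - 2 * (Λ₁ + Λ₂))
    (l₁ l₂ : ℕ → ℝ) (hl₁0 : l₁ 0 = 1) (hl₂0 : l₂ 0 = 1)
    (hl₁ : ∀ n : ℕ, l₁ (n + 1) = 1 - Λ₂ / l₂ n)
    (hl₂ : ∀ n : ℕ, l₂ (n + 1) = 1 - Λ₁ / l₁ n)
    (κ₁ κ₂ : ℕ → ℂ)
    (hκ₁1 : κ₁ 1 = ((2 * ρ₂ ^ 2 : ℝ) : ℂ))
    (hκ₁2 : κ₁ 2 = -(2 * (((ρ₁ * ρ₂ : ℝ)) : ℂ) ^ 2) / (starRingEnd ℂ (z₂ - z₁)) ^ 2)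
    (hκ₁rec : ∀ n : ℕ, 1 ≤ n →
      κ₁ (n + 2) = ((Λ₁ * Λ₂ / (l₂ n * l₁ (n - 1)) ^ 2 : ℝ) : ℂ) * κ₁ n)
    (hκ₂1 : κ₂ 1 = ((2 * ρ₁ ^ 2 : ℝ) : ℂ))
    (hκ₂2 : κ₂ 2 = -(2 * (((ρ₁ * ρ₂ : ℝ)) : ℂ) ^ 2) / (starRingEnd ℂ (z₁ - z₂)) ^ 2)
    (hκ₂rec : ∀ n : ℕ, 1 ≤ n →
      κ₂ (n + 2) = ((Λ₁ * Λ₂ / (l₁ n * l₂ (n - 1)) ^ 2 : ℝ) : ℂ) * κ₂ n) :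
    ∀ n : ℕ, 1 ≤ n →
      κ₂ (n + 1) = -(((ρ₁ ^ 2 : ℝ) : ℂ) / ((starRingEnd ℂ (z₁ - z₂)) ^ 2 * ((l₁ (n - 1) : ℝ) : ℂ) ^ 2)) *
          starRingEnd ℂ (κ₁ n) ∧
      κ₁ (n + 1) = -(((ρ₂ ^ 2 : ℝ) : ℂ) / ((starRingEnd ℂ (z₂ - z₁)) ^ 2 * ((l₂ (n - 1) : ℝ) : ℂ) ^ 2)) *
          starRingEnd ℂ (κ₂ n) :=
  kappa_cross_relations_general z₁ z₂ ρ ρ₁ ρ₂ hρ Λ₁ Λ₂ hΛ₁ hΛ₂ l₁ l₂ hl₁0 hl₂0 κ₁ κ₂ hκ₁1 hκ₁2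
    hκ₁rec hκ₂1 hκ₂2 hκ₂rec
end

section
/- For every n ≥ 0 one has |z₂,ₙ − z₂| = ρ·(1 − λ₁,ₙ) < ρ₂ and |z₁,ₙ − z₁| = ρ·(1 − λ₂,ₙ) < ρ₁; that is, z₁,ₙ lies in the open disk of center z₁ and radius ρ₁ and z₂,ₙ lies in the open disk of center z₂ and radius ρ₂. -/
/-! With `r₁ = ρ₁/ρ` and `r₂ = ρ₂/ρ` the recursion reads `λ₁,ₙ₊₁ = 1 - r₂²/λ₂,ₙ` and
`λ₂,ₙ₊₁ = 1 - r₁²/λ₁,ₙ`. Since `r₁ + r₂ < 1`, the intervals `(1 - r₂, 1]` for `λ₁` and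
`(1 - r₁, 1]` for `λ₂` are swapped into each other by these maps: a value above `1 - r₂ > r₁`
makes `r₁²/λ` smaller than `r₁`. As `z₂,ₙ - z₂ = (1 - λ₁,ₙ)(z₁ - z₂)`, its modulus is
`ρ (1 - λ₁,ₙ) < ρ r₂ = ρ₂`, and symmetrically for `z₁,ₙ`. -/

open Set

lemma one_sub_sq_div_mem_Ioc {r s l : ℝ} (hr : 0 < r) (hrs : r + s < 1)
    (hl : l ∈ Ioc (1 - s) 1) : 1 - r ^ 2 / l ∈ Ioc (1 - r) 1 := by
  have hrl : r < l := by linarith [hl.1]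
  have hl0 : 0 < l := hr.trans hrl
  have hlt : r ^ 2 / l < r := by
    rw [div_lt_iff₀ hl0]
    nlinarith
  exact ⟨by linarith, by linarith [div_nonneg (sq_nonneg r) hl0.le]⟩

lemma coupled_recursion_mem_Ioc_s11 {r₁ r₂ : ℝ} (hr₁ : 0 < r₁) (hr₂ : 0 < r₂) (hsum : r₁ + r₂ < 1)
    {l₁ l₂ : ℕ → ℝ} (hl₁0 : l₁ 0 = 1) (hl₂0 : l₂ 0 = 1)
    (hl₁ : ∀ n, l₁ (n + 1) = 1 - r₂ ^ 2 / l₂ n) (hl₂ : ∀ n, l₂ (n + 1) = 1 - r₁ ^ 2 / l₁ n)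
    (n : ℕ) : l₁ n ∈ Ioc (1 - r₂) 1 ∧ l₂ n ∈ Ioc (1 - r₁) 1 := by
  induction n with
  | zero =>
    rw [hl₁0, hl₂0]
    exact ⟨⟨by linarith, le_rfl⟩, ⟨by linarith, le_rfl⟩⟩
  | succ n ih =>
    rw [hl₁, hl₂]
    exact ⟨one_sub_sq_div_mem_Ioc hr₂ (by linarith) ih.2,
      one_sub_sq_div_mem_Ioc hr₁ hsum ih.1⟩

lemma norm_affine_comb_sub_right (a b : ℂ) (t : ℝ) :
    ‖((1 - t : ℝ) : ℂ) * a + (t : ℂ) * b - b‖ = |1 - t| * ‖a - b‖ := by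
  have h : ((1 - t : ℝ) : ℂ) * a + (t : ℂ) * b - b = ((1 - t : ℝ) : ℂ) * (a - b) := by
    push_cast
    ring
  rw [h, norm_mul, Complex.norm_real, Real.norm_eq_abs]

lemma mul_one_sub_lt_of_one_sub_div_lt {ρ s l : ℝ} (hρ : 0 < ρ) (h : 1 - s / ρ < l) :
    ρ * (1 - l) < s := by
  rwa [← lt_div_iff₀' hρ, sub_lt_comm]

theorem z_seq_in_disks_general
    (z₁ z₂ : ℂ) (ρ ρ₁ ρ₂ : ℝ)
    (hρ : ρ = ‖z₁ - z₂‖)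
    (hρ₁ : 0 < ρ₁) (hρ₂ : 0 < ρ₂) (hsum : ρ₁ + ρ₂ < ρ)
    (Λ₁ Λ₂ : ℝ) (hΛ₁ : Λ₁ = (ρ₁ / ρ) ^ 2) (hΛ₂ : Λ₂ = (ρ₂ / ρ) ^ 2)
    (l₁ l₂ : ℕ → ℝ) (hl₁0 : l₁ 0 = 1) (hl₂0 : l₂ 0 = 1)
    (hl₁ : ∀ n : ℕ, l₁ (n + 1) = 1 - Λ₂ / l₂ n)
    (hl₂ : ∀ n : ℕ, l₂ (n + 1) = 1 - Λ₁ / l₁ n)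
    (z1s z2s : ℕ → ℂ)
    (hz1s : ∀ n : ℕ, z1s n = ((1 - l₂ n : ℝ) : ℂ) * z₂ + ((l₂ n : ℝ) : ℂ) * z₁)
    (hz2s : ∀ n : ℕ, z2s n = ((1 - l₁ n : ℝ) : ℂ) * z₁ + ((l₁ n : ℝ) : ℂ) * z₂) :
    ∀ n : ℕ,
      (‖z2s n - z₂‖ = ρ * (1 - l₁ n) ∧ ρ * (1 - l₁ n) < ρ₂ ∧
        z2s n ∈ Metric.ball z₂ ρ₂) ∧
      (‖z1s n - z₁‖ = ρ * (1 - l₂ n) ∧ ρ * (1 - l₂ n) < ρ₁ ∧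
        z1s n ∈ Metric.ball z₁ ρ₁) := by
  intro n
  have hρ0 : 0 < ρ := by linarith
  subst hΛ₁ hΛ₂
  obtain ⟨h₁, h₂⟩ := coupled_recursion_mem_Ioc_s11 (div_pos hρ₁ hρ0) (div_pos hρ₂ hρ0)
    (by rwa [← add_div, div_lt_one hρ0]) hl₁0 hl₂0 hl₁ hl₂ n
  have hd₂ : ‖z2s n - z₂‖ = ρ * (1 - l₁ n) := by
    rw [hz2s, norm_affine_comb_sub_right, abs_of_nonneg (sub_nonneg.2 h₁.2), ← hρ, mul_comm]
  have hd₁ : ‖z1s n - z₁‖ = ρ * (1 - l₂ n) := by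
    rw [hz1s, norm_affine_comb_sub_right, abs_of_nonneg (sub_nonneg.2 h₂.2), norm_sub_rev, ← hρ,
      mul_comm]
  have hlt₂ := mul_one_sub_lt_of_one_sub_div_lt hρ0 h₁.1
  have hlt₁ := mul_one_sub_lt_of_one_sub_div_lt hρ0 h₂.1
  exact ⟨⟨hd₂, hlt₂, by rwa [Metric.mem_ball, dist_eq_norm, hd₂]⟩,
    ⟨hd₁, hlt₁, by rwa [Metric.mem_ball, dist_eq_norm, hd₁]⟩⟩

theorem z_seq_in_disks
    (z₁ z₂ : ℂ) (hz : z₁ ≠ z₂) (ρ ρ₁ ρ₂ : ℝ)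
    (hρ : ρ = ‖z₁ - z₂‖)
    (hρ₁ : 0 < ρ₁) (hρ₂ : 0 < ρ₂) (hsum : ρ₁ + ρ₂ < ρ)
    (Λ₁ Λ₂ Λ : ℝ) (hΛ₁ : Λ₁ = (ρ₁ / ρ) ^ 2) (hΛ₂ : Λ₂ = (ρ₂ / ρ) ^ 2)
    (hΛ : Λ = (Λ₁ - Λ₂) ^ 2 + 1 - 2 * (Λ₁ + Λ₂))
    (l₁ l₂ : ℕ → ℝ) (hl₁0 : l₁ 0 = 1) (hl₂0 : l₂ 0 = 1)
    (hl₁ : ∀ n : ℕ, l₁ (n + 1) = 1 - Λ₂ / l₂ n)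
    (hl₂ : ∀ n : ℕ, l₂ (n + 1) = 1 - Λ₁ / l₁ n)
    (z1s z2s : ℕ → ℂ)
    (hz1s : ∀ n : ℕ, z1s n = ((1 - l₂ n : ℝ) : ℂ) * z₂ + ((l₂ n : ℝ) : ℂ) * z₁)
    (hz2s : ∀ n : ℕ, z2s n = ((1 - l₁ n : ℝ) : ℂ) * z₁ + ((l₁ n : ℝ) : ℂ) * z₂) :
    ∀ n : ℕ,
      (‖z2s n - z₂‖ = ρ * (1 - l₁ n) ∧ ρ * (1 - l₁ n) < ρ₂ ∧
        z2s n ∈ Metric.ball z₂ ρ₂) ∧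
      (‖z1s n - z₁‖ = ρ * (1 - l₂ n) ∧ ρ * (1 - l₂ n) < ρ₁ ∧
        z1s n ∈ Metric.ball z₁ ρ₁) :=
  z_seq_in_disks_general z₁ z₂ ρ ρ₁ ρ₂ hρ hρ₁ hρ₂ hsum Λ₁ Λ₂ hΛ₁ hΛ₂ l₁ l₂ hl₁0 hl₂0 hl₁ hl₂ z1s z2s
    hz1s hz2s
end

section
/- For every n ≥ 1 and every ξ ∈ ℂ with |ξ − z₁| = ρ₁, one has 1/conj(ξ − z₂,ₙ₋₁) = (1/(λ₁,ₙ₋₁·conj(z₁ − z₂)))·[1 − (ρ₁²/(λ₁,ₙ₋₁·conj(z₁ − z₂)))·1/(ξ − z₁,ₙ)]. -/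
/-!
On the circle `|ξ - z₁| = ρ₁` one has `conj (ξ - z₁) = ρ₁² / (ξ - z₁)`, so `ξ ↦ 1 / conj (ξ - p)`
agrees there with a Möbius transformation of `ξ`, whose pole is the inverse point of `p` in the
circle. The point `z₁,ₙ` is exactly the inverse of `z₂,ₙ₋₁`, and the lower bounds
`λ₁,ₙ ≥ 1 - ρ₂/ρ`, `λ₂,ₙ ≥ 1 - ρ₁/ρ` keep `z₂,ₙ₋₁` outside the closed disk, so no division by
zero occurs.
-/

open ComplexConjugate EuclideanGeometry

theorem one_sub_le_one_sub_sq_div_s13 {t y : ℝ} (ht : 0 ≤ t) (hty : t ≤ y) :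
    1 - t ≤ 1 - t ^ 2 / y := by
  rcases ht.eq_or_lt with rfl | ht
  · simp
  rw [sub_le_sub_iff_left, div_le_iff₀ (ht.trans_le hty)]
  nlinarith

theorem one_sub_le_of_coupled_recursion {s t : ℝ} (hs : 0 ≤ s) (ht : 0 ≤ t) (hst : s + t ≤ 1)
    {x y : ℕ → ℝ} (hx0 : x 0 = 1) (hy0 : y 0 = 1)
    (hx : ∀ n, x (n + 1) = 1 - t ^ 2 / y n) (hy : ∀ n, y (n + 1) = 1 - s ^ 2 / x n) :
    ∀ n, 1 - t ≤ x n ∧ 1 - s ≤ y n := by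
  intro n
  induction n with
  | zero => exact ⟨by linarith [hx0], by linarith [hy0]⟩
  | succ n ih =>
    rw [hx, hy]
    exact ⟨one_sub_le_one_sub_sq_div_s13 ht (by linarith [ih.2]),
      one_sub_le_one_sub_sq_div_s13 hs (by linarith [ih.1])⟩

theorem Complex.inversion_eq_add_div_conj (z₀ : ℂ) (r : ℝ) (p : ℂ) :
    inversion z₀ r p = z₀ + r ^ 2 / conj (p - z₀) := by
  rcases eq_or_ne p z₀ with rfl | hp
  · simp
  have hv : p - z₀ ≠ 0 := sub_ne_zero.mpr hp
  have hnorm : ((‖p - z₀‖ : ℝ) : ℂ) ^ 2 = (p - z₀) * conj (p - z₀) := by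
    rw [Complex.mul_conj']
  rw [inversion, dist_eq_norm, vsub_eq_sub, vadd_eq_add, Complex.real_smul, add_comm,
    Complex.ofReal_pow, Complex.ofReal_div, div_pow, hnorm]
  field_simp [hv, (map_ne_zero (starRingEnd ℂ)).mpr hv]

theorem Complex.inversion_sub_ofReal_mul (z₀ c : ℂ) (r a : ℝ) :
    inversion z₀ r (z₀ - a * c) = z₀ - ((r / ‖c‖) ^ 2 / a : ℝ) * c := by
  rcases eq_or_ne c 0 with rfl | hc
  · simp
  rcases eq_or_ne a 0 with rfl | ha
  · simp
  have hnorm : ((‖c‖ : ℝ) : ℂ) ^ 2 = c * conj c := by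
    rw [Complex.mul_conj']
  rw [Complex.inversion_eq_add_div_conj, sub_sub_cancel_left, map_neg, map_mul,
    Complex.conj_ofReal]
  push_cast
  rw [div_pow, hnorm]
  field_simp [hc, (map_ne_zero (starRingEnd ℂ)).mpr hc, ha]
  ring

theorem Complex.one_div_conj_sub_eq_of_norm_eq {z₀ p ξ : ℂ} {r : ℝ} (hξ : ‖ξ - z₀‖ = r)
    (hp : p ≠ z₀) (hξp : ξ ≠ p) :
    1 / conj (ξ - p) =
      1 / conj (z₀ - p) * (1 - r ^ 2 / conj (z₀ - p) * (1 / (ξ - inversion z₀ r p))) := by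
  set u := ξ - z₀
  set q := z₀ - p
  have hq : conj q ≠ 0 := (map_ne_zero _).mpr (sub_ne_zero.mpr hp.symm)
  have hqu : conj u + conj q ≠ 0 := by
    rw [← map_add, map_ne_zero, show u + q = ξ - p by ring]
    exact sub_ne_zero.mpr hξp
  have hr : (r : ℂ) ^ 2 = u * conj u := by rw [Complex.mul_conj', ← hξ]
  have hpole : ξ - inversion z₀ r p = u * (conj u + conj q) / conj q := by
    rw [Complex.inversion_eq_add_div_conj, hr, show p - z₀ = -q by ring, map_neg]
    field_simp
    ring
  rw [hpole, show ξ - p = u + q by ring, map_add, hr]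
  rcases eq_or_ne u 0 with hu | hu
  · simp [hu]
  field_simp
  ring

theorem inverse_conj_expansion_on_circle_general
    (z₁ z₂ : ℂ) (ρ ρ₁ ρ₂ : ℝ)
    (hρ : ρ = ‖z₁ - z₂‖)
    (hρ₁ : 0 < ρ₁) (hρ₂ : 0 < ρ₂) (hsum : ρ₁ + ρ₂ < ρ)
    (Λ₁ Λ₂ : ℝ) (hΛ₁ : Λ₁ = (ρ₁ / ρ) ^ 2) (hΛ₂ : Λ₂ = (ρ₂ / ρ) ^ 2)
    (l₁ l₂ : ℕ → ℝ) (hl₁0 : l₁ 0 = 1) (hl₂0 : l₂ 0 = 1)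
    (hl₁ : ∀ n : ℕ, l₁ (n + 1) = 1 - Λ₂ / l₂ n)
    (hl₂ : ∀ n : ℕ, l₂ (n + 1) = 1 - Λ₁ / l₁ n)
    (z1s z2s : ℕ → ℂ)
    (hz1s : ∀ n : ℕ, z1s n = ((1 - l₂ n : ℝ) : ℂ) * z₂ + ((l₂ n : ℝ) : ℂ) * z₁)
    (hz2s : ∀ n : ℕ, z2s n = ((1 - l₁ n : ℝ) : ℂ) * z₁ + ((l₁ n : ℝ) : ℂ) * z₂) :
    ∀ n : ℕ, 1 ≤ n → ∀ ξ : ℂ, ‖ξ - z₁‖ = ρ₁ →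
      1 / starRingEnd ℂ (ξ - z2s (n - 1)) =
        (1 / (((l₁ (n - 1) : ℝ) : ℂ) * starRingEnd ℂ (z₁ - z₂))) *
          (1 - (((ρ₁ ^ 2 : ℝ) : ℂ) / (((l₁ (n - 1) : ℝ) : ℂ) * starRingEnd ℂ (z₁ - z₂))) *
            (1 / (ξ - z1s n))) := by
  intro n hn ξ hξ
  obtain ⟨m, rfl⟩ := Nat.exists_eq_add_of_le' hn
  rw [Nat.add_sub_cancel]
  have hρ0 : 0 < ρ := by linarith
  have hl₁m : ρ₁ / ρ < l₁ m := by
    subst hΛ₁ hΛ₂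
    have hst : ρ₁ / ρ + ρ₂ / ρ < 1 := by rwa [← add_div, div_lt_one hρ0]
    have hbound := (one_sub_le_of_coupled_recursion (by positivity) (by positivity) hst.le
      hl₁0 hl₂0 hl₁ hl₂ m).1
    linarith
  have hz2 : z2s m = z₁ - l₁ m * (z₁ - z₂) := by rw [hz2s]; push_cast; ring
  have hz1 : z1s (m + 1) = inversion z₁ ρ₁ (z2s m) := by
    rw [hz2, Complex.inversion_sub_ofReal_mul, hz1s, hl₂, hΛ₁, hρ]; push_cast; ring
  have hdist : ‖z2s m - z₁‖ = l₁ m * ρ := by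
    rw [hz2, sub_sub_cancel_left, norm_neg, norm_mul, Complex.norm_real, Real.norm_eq_abs,
      abs_of_pos ((div_pos hρ₁ hρ0).trans hl₁m), hρ]
  have hlρ : ρ₁ < l₁ m * ρ := by rwa [div_lt_iff₀ hρ0] at hl₁m
  have hp : z2s m ≠ z₁ := by
    rintro h; rw [h, sub_self, norm_zero] at hdist; linarith
  have hξp : ξ ≠ z2s m := by rintro rfl; linarith
  rw [hz1, Complex.one_div_conj_sub_eq_of_norm_eq hξ hp hξp, hz2, sub_sub_cancel, map_mul,
    Complex.conj_ofReal, Complex.ofReal_pow]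

theorem inverse_conj_expansion_on_circle
    (z₁ z₂ : ℂ) (hz : z₁ ≠ z₂) (ρ ρ₁ ρ₂ : ℝ)
    (hρ : ρ = ‖z₁ - z₂‖)
    (hρ₁ : 0 < ρ₁) (hρ₂ : 0 < ρ₂) (hsum : ρ₁ + ρ₂ < ρ)
    (Λ₁ Λ₂ Λ : ℝ) (hΛ₁ : Λ₁ = (ρ₁ / ρ) ^ 2) (hΛ₂ : Λ₂ = (ρ₂ / ρ) ^ 2)
    (hΛ : Λ = (Λ₁ - Λ₂) ^ 2 + 1 - 2 * (Λ₁ + Λ₂))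
    (l₁ l₂ : ℕ → ℝ) (hl₁0 : l₁ 0 = 1) (hl₂0 : l₂ 0 = 1)
    (hl₁ : ∀ n : ℕ, l₁ (n + 1) = 1 - Λ₂ / l₂ n)
    (hl₂ : ∀ n : ℕ, l₂ (n + 1) = 1 - Λ₁ / l₁ n)
    (z1s z2s : ℕ → ℂ)
    (hz1s : ∀ n : ℕ, z1s n = ((1 - l₂ n : ℝ) : ℂ) * z₂ + ((l₂ n : ℝ) : ℂ) * z₁)
    (hz2s : ∀ n : ℕ, z2s n = ((1 - l₁ n : ℝ) : ℂ) * z₁ + ((l₁ n : ℝ) : ℂ) * z₂) :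
    ∀ n : ℕ, 1 ≤ n → ∀ ξ : ℂ, ‖ξ - z₁‖ = ρ₁ →
      1 / starRingEnd ℂ (ξ - z2s (n - 1)) =
        (1 / (((l₁ (n - 1) : ℝ) : ℂ) * starRingEnd ℂ (z₁ - z₂))) *
          (1 - (((ρ₁ ^ 2 : ℝ) : ℂ) / (((l₁ (n - 1) : ℝ) : ℂ) * starRingEnd ℂ (z₁ - z₂))) *
            (1 / (ξ - z1s n))) :=
  inverse_conj_expansion_on_circle_general z₁ z₂ ρ ρ₁ ρ₂ hρ hρ₁ hρ₂ hsum Λ₁ Λ₂ hΛ₁ hΛ₂ l₁ l₂ hl₁0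
    hl₂0 hl₁ hl₂ z1s z2s hz1s hz2s
end

section
/- The series of functions Σₙ≥₀ [q₁,₂ₙ(z) + conj(q₁,₂ₙ₊₁(z))] converges uniformly on the closed disk {z ∈ ℂ : |z − z₁| ≤ ρ₁}. -/
/-! Put a = ρ₁/ρ and b = ρ₂/ρ. Since a + b < 1, the recursion preserves λ₁,ₙ ≥ 1 - b and
λ₂,ₙ ≥ 1 - a. The first bound keeps the poles z₂,ₙ at distance at least ρ - ρ₁ - ρ₂ from the disk,
so that |q₁,ₙ| ≤ C |κ₁,ₙ| there for n ≥ 1; together they make the two-step recursion of κ₁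
contract by the factor (ab / ((1 - a)(1 - b)))² < 1. The Weierstrass M-test concludes. -/

open Filter Metric

theorem coupled_recursion_lower_bounds {a b : ℝ} (ha : 0 ≤ a) (hb : 0 ≤ b) (hab : a + b ≤ 1)
    {l₁ l₂ : ℕ → ℝ} (hl₁0 : l₁ 0 = 1) (hl₂0 : l₂ 0 = 1)
    (hl₁ : ∀ n, l₁ (n + 1) = 1 - b ^ 2 / l₂ n) (hl₂ : ∀ n, l₂ (n + 1) = 1 - a ^ 2 / l₁ n) :
    ∀ n, 1 - b ≤ l₁ n ∧ 1 - a ≤ l₂ n := by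
  intro n
  induction n with
  | zero => rw [hl₁0, hl₂0]; constructor <;> linarith
  | succ n ih =>
    obtain ⟨h₁, h₂⟩ := ih
    have hb₂ : b ^ 2 / l₂ n ≤ b :=
      div_le_of_le_mul₀ (by linarith) hb (by nlinarith)
    have ha₁ : a ^ 2 / l₁ n ≤ a :=
      div_le_of_le_mul₀ (by linarith) ha (by nlinarith)
    rw [hl₁, hl₂]
    constructor <;> linarith

theorem summable_norm_add_norm_of_two_step_ratio {E : Type*} [SeminormedAddCommGroup E]
    {κ : ℕ → E} {t : ℝ} (ht : t < 1) (h : ∀ᶠ n in atTop, ‖κ (n + 2)‖ ≤ t * ‖κ n‖) :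
    Summable fun n => ‖κ (2 * n)‖ + ‖κ (2 * n + 1)‖ := by
  refine summable_of_ratio_norm_eventually_le ht ?_
  obtain ⟨N, hN⟩ := eventually_atTop.1 h
  filter_upwards [eventually_ge_atTop N] with n hn
  have heven := hN (2 * n) (by omega)
  have hodd := hN (2 * n + 1) (by omega)
  rw [Real.norm_of_nonneg (by positivity), Real.norm_of_nonneg (by positivity)]
  rw [show 2 * (n + 1) = 2 * n + 2 by ring, show 2 * n + 2 + 1 = 2 * n + 1 + 2 by ring]
  linarith

theorem sub_le_norm_sub_of_mem_closedBall {z₁ z₂ z : ℂ} {ρ₁ l : ℝ}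
    (hz : z ∈ closedBall z₁ ρ₁) (hl : 0 ≤ l) :
    l * ‖z₁ - z₂‖ - ρ₁ ≤ ‖z - (((1 - l : ℝ) : ℂ) * z₁ + (l : ℂ) * z₂)‖ := by
  have hp : ((1 - l : ℝ) : ℂ) * z₁ + (l : ℂ) * z₂ - z₁ = (l : ℂ) * (z₂ - z₁) := by
    push_cast; ring
  have hpz := norm_sub_norm_le (((1 - l : ℝ) : ℂ) * z₁ + (l : ℂ) * z₂ - z₁) (z - z₁)
  rw [sub_sub_sub_cancel_right, hp, norm_mul, Complex.norm_real, Real.norm_of_nonneg hl,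
    norm_sub_rev z₂, norm_sub_rev _ z] at hpz
  rw [mem_closedBall, dist_eq_norm] at hz
  linarith

theorem norm_pole_density_le {z₁ z₂ z κ : ℂ} {ρ₁ ρ₂ l : ℝ}
    (hz : z ∈ closedBall z₁ ρ₁) (hsum : ρ₁ + ρ₂ < ‖z₁ - z₂‖)
    (hl : ‖z₁ - z₂‖ - ρ₂ ≤ l * ‖z₁ - z₂‖) :
    ‖κ / (z - (((1 - l : ℝ) : ℂ) * z₁ + (l : ℂ) * z₂)) + -κ / (2 * (l : ℂ) * (z₁ - z₂))‖ ≤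
      2 / (‖z₁ - z₂‖ - ρ₁ - ρ₂) * ‖κ‖ := by
  set ρ := ‖z₁ - z₂‖
  have hρ₁ : 0 ≤ ρ₁ := dist_nonneg.trans (mem_closedBall.1 hz)
  set δ := ρ - ρ₁ - ρ₂
  have hδ : 0 < δ := by linarith
  have hl0 : 0 ≤ l := by
    by_contra! hneg; nlinarith [norm_nonneg (z₁ - z₂)]
  have hpole : δ ≤ ‖z - (((1 - l : ℝ) : ℂ) * z₁ + (l : ℂ) * z₂)‖ := by
    linarith [sub_le_norm_sub_of_mem_closedBall (z₂ := z₂) hz hl0]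
  have hshift : δ ≤ ‖2 * (l : ℂ) * (z₁ - z₂)‖ := by
    rw [norm_mul, norm_mul, Complex.norm_two, Complex.norm_real, Real.norm_of_nonneg hl0]
    nlinarith
  calc _ ≤ ‖κ‖ / ‖z - (((1 - l : ℝ) : ℂ) * z₁ + (l : ℂ) * z₂)‖ +
        ‖κ‖ / ‖2 * (l : ℂ) * (z₁ - z₂)‖ := by
        refine (norm_add_le _ _).trans_eq ?_
        rw [norm_div, norm_div, norm_neg]
    _ ≤ ‖κ‖ / δ + ‖κ‖ / δ := by gcongr
    _ = 2 / δ * ‖κ‖ := by ring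

theorem sq_mul_sq_div_sq_le {a b x y : ℝ} (ha : a < 1) (hb : b < 1) (hx : 1 - a ≤ x)
    (hy : 1 - b ≤ y) : a ^ 2 * b ^ 2 / (x * y) ^ 2 ≤ (a * b / ((1 - a) * (1 - b))) ^ 2 := by
  have hab : 0 < (1 - a) * (1 - b) := mul_pos (by linarith) (by linarith)
  rw [div_pow, ← mul_pow]
  gcongr
  linarith

theorem contraction_ratio_lt_one {a b : ℝ} (ha : 0 ≤ a) (hb : 0 ≤ b) (hab : a + b < 1) :
    (a * b / ((1 - a) * (1 - b))) ^ 2 < 1 := by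
  have hpos : 0 < (1 - a) * (1 - b) := mul_pos (by linarith) (by linarith)
  refine pow_lt_one₀ (by positivity) ?_ two_ne_zero
  rw [div_lt_one hpos]
  nlinarith

theorem series_uniform_convergence_general
    (z₁ z₂ : ℂ) (ρ ρ₁ ρ₂ : ℝ)
    (hρ : ρ = ‖z₁ - z₂‖)
    (hρ₁ : 0 < ρ₁) (hρ₂ : 0 < ρ₂) (hsum : ρ₁ + ρ₂ < ρ)
    (Λ₁ Λ₂ : ℝ) (hΛ₁ : Λ₁ = (ρ₁ / ρ) ^ 2) (hΛ₂ : Λ₂ = (ρ₂ / ρ) ^ 2)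
    (l₁ l₂ : ℕ → ℝ) (hl₁0 : l₁ 0 = 1) (hl₂0 : l₂ 0 = 1)
    (hl₁ : ∀ n : ℕ, l₁ (n + 1) = 1 - Λ₂ / l₂ n)
    (hl₂ : ∀ n : ℕ, l₂ (n + 1) = 1 - Λ₁ / l₁ n)
    (κ₁ : ℕ → ℂ)
    (hκ₁rec : ∀ n : ℕ, 1 ≤ n →
      κ₁ (n + 2) = ((Λ₁ * Λ₂ / (l₂ n * l₁ (n - 1)) ^ 2 : ℝ) : ℂ) * κ₁ n)
    (z2s : ℕ → ℂ)
    (hz2s : ∀ n : ℕ, z2s n = ((1 - l₁ n : ℝ) : ℂ) * z₁ + ((l₁ n : ℝ) : ℂ) * z₂)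
    (α₁ : ℕ → ℂ)
    (hα₁ : ∀ n : ℕ, 1 ≤ n →
      α₁ n = -κ₁ n / (2 * ((l₁ (n - 1) : ℝ) : ℂ) * (z₁ - z₂)))
    (q₁ : ℕ → ℂ → ℂ)
    (hq₁0 : ∀ z : ℂ, q₁ 0 z = 2 * (z - z₁))
    (hq₁ : ∀ n : ℕ, 1 ≤ n → ∀ z : ℂ, q₁ n z = κ₁ n / (z - z2s (n - 1)) + α₁ n)
    :
    ∃ g : ℂ → ℂ,
      TendstoUniformlyOn
        (fun N : ℕ => fun z : ℂ =>
          ∑ n ∈ Finset.range N, (q₁ (2 * n) z + starRingEnd ℂ (q₁ (2 * n + 1) z)))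
        g Filter.atTop (Metric.closedBall z₁ ρ₁) := by
  have hρ0 : 0 < ρ := by linarith
  set a := ρ₁ / ρ with ha
  set b := ρ₂ / ρ with hb
  have ha0 : 0 ≤ a := by positivity
  have hb0 : 0 ≤ b := by positivity
  have hab : a + b < 1 := by rw [ha, hb, ← add_div, div_lt_one hρ0]; exact hsum
  subst hΛ₁ hΛ₂
  have hl := coupled_recursion_lower_bounds ha0 hb0 hab.le hl₁0 hl₂0 hl₁ hl₂
  have hdecay : ∀ᶠ n in atTop, ‖κ₁ (n + 2)‖ ≤ (a * b / ((1 - a) * (1 - b))) ^ 2 * ‖κ₁ n‖ := by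
    filter_upwards [eventually_ge_atTop 1] with n hn
    rw [hκ₁rec n hn, norm_mul, Complex.norm_real, Real.norm_of_nonneg (by positivity)]
    gcongr
    exact sq_mul_sq_div_sq_le (by linarith) (by linarith) (hl n).2 (hl (n - 1)).1
  have hpairs := summable_norm_add_norm_of_two_step_ratio
    (contraction_ratio_lt_one ha0 hb0 hab) hdecay
  set C := 2 / (ρ - ρ₁ - ρ₂)
  have hq : ∀ n, 1 ≤ n → ∀ z ∈ closedBall z₁ ρ₁, ‖q₁ n z‖ ≤ C * ‖κ₁ n‖ := by
    intro n hn z hz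
    have hpole : ρ - ρ₂ ≤ l₁ (n - 1) * ρ := by
      have := mul_le_mul_of_nonneg_right (hl (n - 1)).1 hρ0.le
      rwa [sub_mul, one_mul, hb, div_mul_cancel₀ _ hρ0.ne'] at this
    rw [hq₁ n hn, hz2s, hα₁ n hn]
    subst hρ
    exact norm_pole_density_le hz hsum hpole
  refine ⟨_, tendstoUniformlyOn_tsum_nat
    ((hpairs.mul_left C).update 0 (2 * ρ₁ + C * ‖κ₁ 1‖)) ?_⟩
  intro n z hz
  refine (norm_add_le _ _).trans ?_
  rw [Complex.norm_conj]
  rcases n with _ | n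
  · have h0 : ‖q₁ 0 z‖ ≤ 2 * ρ₁ := by
      rw [hq₁0, norm_mul, Complex.norm_two, ← dist_eq_norm]
      linarith [mem_closedBall.1 hz]
    rw [Function.update_self]
    linarith [hq 1 le_rfl z hz]
  · rw [Function.update_of_ne n.succ_ne_zero]
    exact (add_le_add (hq (2 * (n + 1)) (by omega) z hz)
      (hq (2 * (n + 1) + 1) (by omega) z hz)).trans_eq (mul_add _ _ _).symm

theorem series_uniform_convergence
    (z₁ z₂ : ℂ) (hz : z₁ ≠ z₂) (ρ ρ₁ ρ₂ : ℝ)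
    (hρ : ρ = ‖z₁ - z₂‖)
    (hρ₁ : 0 < ρ₁) (hρ₂ : 0 < ρ₂) (hsum : ρ₁ + ρ₂ < ρ)
    (Λ₁ Λ₂ Λ : ℝ) (hΛ₁ : Λ₁ = (ρ₁ / ρ) ^ 2) (hΛ₂ : Λ₂ = (ρ₂ / ρ) ^ 2)
    (hΛ : Λ = (Λ₁ - Λ₂) ^ 2 + 1 - 2 * (Λ₁ + Λ₂))
    (l₁ l₂ : ℕ → ℝ) (hl₁0 : l₁ 0 = 1) (hl₂0 : l₂ 0 = 1)
    (hl₁ : ∀ n : ℕ, l₁ (n + 1) = 1 - Λ₂ / l₂ n)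
    (hl₂ : ∀ n : ℕ, l₂ (n + 1) = 1 - Λ₁ / l₁ n)
    (κ₁ κ₂ : ℕ → ℂ)
    (hκ₁1 : κ₁ 1 = ((2 * ρ₂ ^ 2 : ℝ) : ℂ))
    (hκ₁2 : κ₁ 2 = -(2 * (((ρ₁ * ρ₂ : ℝ)) : ℂ) ^ 2) / (starRingEnd ℂ (z₂ - z₁)) ^ 2)
    (hκ₁rec : ∀ n : ℕ, 1 ≤ n →
      κ₁ (n + 2) = ((Λ₁ * Λ₂ / (l₂ n * l₁ (n - 1)) ^ 2 : ℝ) : ℂ) * κ₁ n)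
    (hκ₂1 : κ₂ 1 = ((2 * ρ₁ ^ 2 : ℝ) : ℂ))
    (hκ₂2 : κ₂ 2 = -(2 * (((ρ₁ * ρ₂ : ℝ)) : ℂ) ^ 2) / (starRingEnd ℂ (z₁ - z₂)) ^ 2)
    (hκ₂rec : ∀ n : ℕ, 1 ≤ n →
      κ₂ (n + 2) = ((Λ₁ * Λ₂ / (l₁ n * l₂ (n - 1)) ^ 2 : ℝ) : ℂ) * κ₂ n)
    (z1s z2s : ℕ → ℂ)
    (hz1s : ∀ n : ℕ, z1s n = ((1 - l₂ n : ℝ) : ℂ) * z₂ + ((l₂ n : ℝ) : ℂ) * z₁)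
    (hz2s : ∀ n : ℕ, z2s n = ((1 - l₁ n : ℝ) : ℂ) * z₁ + ((l₁ n : ℝ) : ℂ) * z₂)
    (α₁ : ℕ → ℂ)
    (hα₁ : ∀ n : ℕ, 1 ≤ n →
      α₁ n = -κ₁ n / (2 * ((l₁ (n - 1) : ℝ) : ℂ) * (z₁ - z₂)))
    (q₁ : ℕ → ℂ → ℂ)
    (hq₁0 : ∀ z : ℂ, q₁ 0 z = 2 * (z - z₁))
    (hq₁ : ∀ n : ℕ, 1 ≤ n → ∀ z : ℂ, q₁ n z = κ₁ n / (z - z2s (n - 1)) + α₁ n)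
    :
    ∃ g : ℂ → ℂ,
      TendstoUniformlyOn
        (fun N : ℕ => fun z : ℂ =>
          ∑ n ∈ Finset.range N, (q₁ (2 * n) z + starRingEnd ℂ (q₁ (2 * n + 1) z)))
        g Filter.atTop (Metric.closedBall z₁ ρ₁) :=
  series_uniform_convergence_general z₁ z₂ ρ ρ₁ ρ₂ hρ hρ₁ hρ₂ hsum Λ₁ Λ₂ hΛ₁ hΛ₂ l₁ l₂ hl₁0 hl₂0 hl₁
    hl₂ κ₁ hκ₁rec z2s hz2s α₁ hα₁ q₁ hq₁0 hq₁
end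

section
/- Let F be a complex-differentiable function on an open set containing the closed disk {z : |z − z₁| ≤ ρ₁}. Then for every n ≥ 1, the counterclockwise circle integral ∮_{|z−z₁|=ρ₁} conj(q₁,ₙ(z))·F′(z) dz equals 2πi·κ₂,ₙ₊₁·F′(z₁,ₙ). -/
/-!
On the circle `|z - z₁| = ρ₁` we have `conj (z - z₁) = ρ₁² / (z - z₁)`, so there the conjugate of
the density `κ / (z - p) + α` agrees with a meromorphic function whose only pole in the disk is a
simple one at the inversion of `p` in the circle. Cauchy's formula evaluates the integral at that
point, and for `p = z₂,ₙ₋₁` the inversion is `z₁,ₙ`. The residue `-conj κ₁,ₙ ρ₁² / conj (p - z₁)²`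
is `κ₂,ₙ₊₁`: this holds for `n = 1, 2` and both sides satisfy the same two-step recursion.
-/

open Complex ComplexConjugate Metric EuclideanGeometry
open scoped Real

theorem EuclideanGeometry.inversion_mem_ball {V P : Type*} [NormedAddCommGroup V]
    [InnerProductSpace ℝ V] [MetricSpace P] [NormedAddTorsor V P] {c p : P} {R : ℝ}
    (hR : 0 < R) (hp : R < dist p c) : inversion c R p ∈ ball c R := by
  rw [mem_ball, dist_inversion_center, div_lt_iff₀ (hR.trans hp)]
  nlinarith

namespace Complex

theorem conj_sub_eq_of_mem_sphere {c z : ℂ} {R : ℝ} (hz : z ∈ sphere c R) :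
    conj (z - c) = (R : ℂ) ^ 2 / (z - c) := by
  rw [Metric.mem_sphere, dist_eq] at hz
  rcases eq_or_ne (z - c) 0 with h | h
  · simp [h]
  · rw [eq_div_iff h, mul_comm, mul_conj, normSq_eq_norm_sq, hz]
    push_cast
    ring

theorem inversion_eq_add_div_conj_s17 (c : ℂ) (R : ℝ) (p : ℂ) :
    inversion c R p = c + (R : ℂ) ^ 2 / conj (p - c) := by
  rcases eq_or_ne (p - c) 0 with h | h
  · simp [sub_eq_zero.mp h]
  · have hn : (‖p - c‖ : ℂ) ≠ 0 := by simpa using h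
    rw [inversion, dist_eq, vsub_eq_sub, vadd_eq_add, real_smul, add_comm]
    congr 1
    rw [eq_div_iff ((map_ne_zero _).mpr h), mul_assoc, mul_conj, normSq_eq_norm_sq]
    push_cast
    field_simp

theorem inversion_add_mul_sub (c q : ℂ) (R : ℝ) {t : ℝ} (ht : t ≠ 0) :
    inversion c R (c + t * (q - c)) = c + ((R / ‖q - c‖) ^ 2 / t : ℝ) * (q - c) := by
  rw [inversion, dist_eq, vsub_eq_sub, vadd_eq_add, add_sub_cancel_left, norm_mul, norm_real,
    Real.norm_eq_abs, real_smul, add_comm]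
  have key : (R / (|t| * ‖q - c‖)) ^ 2 * t = (R / ‖q - c‖) ^ 2 / t := by
    rw [mul_comm |t|, ← div_div, div_pow _ |t|, sq_abs]
    field_simp
  rw [← mul_assoc, ← ofReal_mul, key]

theorem conj_div_sub_add_eq_of_mem_sphere {c p z : ℂ} {R : ℝ} (hR : 0 < R) (hp : R < dist p c)
    (hz : z ∈ sphere c R) (κ α : ℂ) :
    conj (κ / (z - p) + α) = (z - inversion c R p)⁻¹ *
      (-conj κ * R ^ 2 / conj (p - c) ^ 2 +
        (conj α - conj κ / conj (p - c)) * (z - inversion c R p)) := by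
  have hzc : z - c ≠ 0 := by
    rw [sub_ne_zero]; rintro rfl; simp at hz; linarith
  have hd : conj (p - c) ≠ 0 := by
    rw [map_ne_zero, sub_ne_zero]; rintro rfl; simp at hp; linarith
  have hzw : z - inversion c R p ≠ 0 := by
    rw [sub_ne_zero]; rintro rfl
    exact (mem_ball.mp (inversion_mem_ball hR hp)).ne (mem_sphere.mp hz)
  have hzp : conj (z - p) = (R : ℂ) ^ 2 / (z - c) - conj (p - c) := by
    rw [← conj_sub_eq_of_mem_sphere hz, ← map_sub]; ring_nf
  have hzp_ne : conj (z - p) ≠ 0 := by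
    rw [map_ne_zero, sub_ne_zero]; rintro rfl; exact hp.ne (mem_sphere.mp hz).symm
  rw [inversion_eq_add_div_conj_s17, show z - (c + (R : ℂ) ^ 2 / conj (p - c)) =
    (z - c) - (R : ℂ) ^ 2 / conj (p - c) by ring] at hzw ⊢
  rw [map_add, map_div₀, hzp]
  rw [hzp] at hzp_ne
  generalize z - c = u at *
  generalize conj (p - c) = d at *
  have hratio : (u - (R : ℂ) ^ 2 / d) / ((R : ℂ) ^ 2 / u - d) = -u / d := by
    rw [div_eq_iff hzp_ne]; field_simp; ring
  rw [eq_inv_mul_iff_mul_eq₀ hzw]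
  calc (u - (R : ℂ) ^ 2 / d) * (conj κ / ((R : ℂ) ^ 2 / u - d) + conj α)
      = conj κ * ((u - (R : ℂ) ^ 2 / d) / ((R : ℂ) ^ 2 / u - d)) +
          conj α * (u - (R : ℂ) ^ 2 / d) := by ring
    _ = _ := by rw [hratio]; field_simp; ring

theorem circleIntegral_conj_div_sub_add_mul {c p : ℂ} {R : ℝ} (hR : 0 < R) (hp : R < dist p c)
    {f : ℂ → ℂ} (hf : DifferentiableOn ℂ f (closedBall c R)) (κ α : ℂ) :
    (∮ z in C(c, R), conj (κ / (z - p) + α) * f z) =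
      2 * π * I * (-conj κ * R ^ 2 / conj (p - c) ^ 2) * f (inversion c R p) := by
  have hg : DifferentiableOn ℂ (fun z => (-conj κ * R ^ 2 / conj (p - c) ^ 2 +
      (conj α - conj κ / conj (p - c)) * (z - inversion c R p)) * f z) (closedBall c R) := by
    fun_prop
  rw [circleIntegral.integral_congr hR.le fun z hz => ?_,
    hg.circleIntegral_sub_inv_smul (inversion_mem_ball hR hp)]
  · simp only [sub_self, mul_zero, add_zero, smul_eq_mul, mul_assoc]
  · rw [smul_eq_mul, conj_div_sub_add_eq_of_mem_sphere hR hp hz, mul_assoc]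

end Complex

theorem one_sub_le_lambda {a b : ℝ} (ha : 0 ≤ a) (hb : 0 ≤ b) (hab : a + b < 1)
    {l₁ l₂ : ℕ → ℝ} (hl₁0 : l₁ 0 = 1) (hl₂0 : l₂ 0 = 1)
    (hl₁ : ∀ n, l₁ (n + 1) = 1 - b ^ 2 / l₂ n) (hl₂ : ∀ n, l₂ (n + 1) = 1 - a ^ 2 / l₁ n) :
    ∀ n, 1 - b ≤ l₁ n ∧ 1 - a ≤ l₂ n
  | 0 => by rw [hl₁0, hl₂0]; constructor <;> linarith
  | n + 1 => by
    obtain ⟨h₁, h₂⟩ := one_sub_le_lambda ha hb hab hl₁0 hl₂0 hl₁ hl₂ n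
    rw [hl₁, hl₂]
    constructor
    · have : b ^ 2 / l₂ n ≤ b := by rw [div_le_iff₀ (by linarith)]; nlinarith
      linarith
    · have : a ^ 2 / l₁ n ≤ a := by rw [div_le_iff₀ (by linarith)]; nlinarith
      linarith

theorem kappa₂_add_two_eq_conj_kappa₁ {z₁ z₂ : ℂ} {ρ ρ₁ ρ₂ : ℝ} (hρ : ρ = ‖z₁ - z₂‖)
    {Λ₁ Λ₂ : ℝ} (hΛ₁ : Λ₁ = (ρ₁ / ρ) ^ 2) (hΛ₂ : Λ₂ = (ρ₂ / ρ) ^ 2)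
    {l₁ l₂ : ℕ → ℝ} (hl₁0 : l₁ 0 = 1) (hl₂0 : l₂ 0 = 1) {κ₁ κ₂ : ℕ → ℂ}
    (hκ₁1 : κ₁ 1 = ((2 * ρ₂ ^ 2 : ℝ) : ℂ))
    (hκ₁2 : κ₁ 2 = -(2 * ((ρ₁ * ρ₂ : ℝ) : ℂ) ^ 2) / conj (z₂ - z₁) ^ 2)
    (hκ₁rec : ∀ n : ℕ, 1 ≤ n →
      κ₁ (n + 2) = ((Λ₁ * Λ₂ / (l₂ n * l₁ (n - 1)) ^ 2 : ℝ) : ℂ) * κ₁ n)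
    (hκ₂1 : κ₂ 1 = ((2 * ρ₁ ^ 2 : ℝ) : ℂ))
    (hκ₂2 : κ₂ 2 = -(2 * ((ρ₁ * ρ₂ : ℝ) : ℂ) ^ 2) / conj (z₁ - z₂) ^ 2)
    (hκ₂rec : ∀ n : ℕ, 1 ≤ n →
      κ₂ (n + 2) = ((Λ₁ * Λ₂ / (l₁ n * l₂ (n - 1)) ^ 2 : ℝ) : ℂ) * κ₂ n) (n : ℕ) :
    κ₂ (n + 2) = -conj (κ₁ (n + 1)) * (ρ₁ : ℂ) ^ 2 / ((l₁ n : ℂ) * conj (z₂ - z₁)) ^ 2 := by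
  induction n using Nat.twoStepInduction with
  | zero =>
    rw [hκ₂2, hκ₁1, conj_ofReal, hl₁0, ← neg_sub z₂, map_neg]
    push_cast
    ring
  | one =>
    have hnorm : ((z₂ - z₁) * conj (z₂ - z₁))⁻¹ = ((ρ : ℂ) ^ 2)⁻¹ := by
      rw [mul_conj, normSq_eq_norm_sq, hρ, norm_sub_rev]; push_cast; rfl
    rw [hκ₂rec 1 le_rfl, hκ₂1, hl₂0, hκ₁2, hΛ₁, hΛ₂]
    simp only [map_div₀, map_neg, map_mul, map_pow, conj_ofReal, conj_conj, map_ofNat]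
    push_cast
    generalize conj (z₂ - z₁) = c at *
    generalize z₂ - z₁ = d at *
    linear_combination (-2 * (ρ₁ : ℂ) ^ 4 * (ρ₂ : ℂ) ^ 2 / (l₁ 1 : ℂ) ^ 2 *
      ((d * c)⁻¹ + ((ρ : ℂ) ^ 2)⁻¹)) * hnorm
  | more n ih _ =>
    rw [hκ₂rec (n + 2) (by omega), ih, show n + 2 + 1 = n + 1 + 2 by ring,
      hκ₁rec (n + 1) (by omega)]
    simp only [Nat.add_sub_cancel, map_mul, conj_ofReal]
    push_cast
    ring
theorem conj_density_circle_integral_general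
    (z₁ z₂ : ℂ) (ρ ρ₁ ρ₂ : ℝ)
    (hρ : ρ = ‖z₁ - z₂‖)
    (hρ₁ : 0 < ρ₁) (hρ₂ : 0 < ρ₂) (hsum : ρ₁ + ρ₂ < ρ)
    (Λ₁ Λ₂ : ℝ) (hΛ₁ : Λ₁ = (ρ₁ / ρ) ^ 2) (hΛ₂ : Λ₂ = (ρ₂ / ρ) ^ 2)
    (l₁ l₂ : ℕ → ℝ) (hl₁0 : l₁ 0 = 1) (hl₂0 : l₂ 0 = 1)
    (hl₁ : ∀ n : ℕ, l₁ (n + 1) = 1 - Λ₂ / l₂ n)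
    (hl₂ : ∀ n : ℕ, l₂ (n + 1) = 1 - Λ₁ / l₁ n)
    (κ₁ κ₂ : ℕ → ℂ)
    (hκ₁1 : κ₁ 1 = ((2 * ρ₂ ^ 2 : ℝ) : ℂ))
    (hκ₁2 : κ₁ 2 = -(2 * (((ρ₁ * ρ₂ : ℝ)) : ℂ) ^ 2) / (starRingEnd ℂ (z₂ - z₁)) ^ 2)
    (hκ₁rec : ∀ n : ℕ, 1 ≤ n →
      κ₁ (n + 2) = ((Λ₁ * Λ₂ / (l₂ n * l₁ (n - 1)) ^ 2 : ℝ) : ℂ) * κ₁ n)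
    (hκ₂1 : κ₂ 1 = ((2 * ρ₁ ^ 2 : ℝ) : ℂ))
    (hκ₂2 : κ₂ 2 = -(2 * (((ρ₁ * ρ₂ : ℝ)) : ℂ) ^ 2) / (starRingEnd ℂ (z₁ - z₂)) ^ 2)
    (hκ₂rec : ∀ n : ℕ, 1 ≤ n →
      κ₂ (n + 2) = ((Λ₁ * Λ₂ / (l₁ n * l₂ (n - 1)) ^ 2 : ℝ) : ℂ) * κ₂ n)
    (z1s z2s : ℕ → ℂ)
    (hz1s : ∀ n : ℕ, z1s n = ((1 - l₂ n : ℝ) : ℂ) * z₂ + ((l₂ n : ℝ) : ℂ) * z₁)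
    (hz2s : ∀ n : ℕ, z2s n = ((1 - l₁ n : ℝ) : ℂ) * z₁ + ((l₁ n : ℝ) : ℂ) * z₂)
    (α₁ : ℕ → ℂ)
    (q₁ : ℕ → ℂ → ℂ)
    (hq₁ : ∀ n : ℕ, 1 ≤ n → ∀ z : ℂ, q₁ n z = κ₁ n / (z - z2s (n - 1)) + α₁ n)
    (F : ℂ → ℂ) (U : Set ℂ) (hU : IsOpen U)
    (hUb : Metric.closedBall z₁ ρ₁ ⊆ U) (hF : DifferentiableOn ℂ F U) :
    ∀ n : ℕ, 1 ≤ n →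
      (∮ z in C(z₁, ρ₁), starRingEnd ℂ (q₁ n z) * deriv F z) =
        2 * (Real.pi : ℂ) * Complex.I * κ₂ (n + 1) * deriv F (z1s n) := by
  intro n hn
  obtain ⟨m, rfl⟩ : ∃ m, n = m + 1 := ⟨n - 1, by omega⟩
  have hρpos : 0 < ρ := by linarith
  have hl : ρ₁ / ρ < l₁ m := by
    have hsum' : ρ₁ / ρ + ρ₂ / ρ < 1 := by rw [← add_div, div_lt_one hρpos]; exact hsum
    have := (one_sub_le_lambda (by positivity) (by positivity) hsum' hl₁0 hl₂0
      (fun n => by rw [hl₁, hΛ₂]) (fun n => by rw [hl₂, hΛ₁]) m).1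
    linarith
  have hlpos : 0 < l₁ m := (div_pos hρ₁ hρpos).trans hl
  have hp : z2s m = z₁ + (l₁ m : ℂ) * (z₂ - z₁) := by rw [hz2s]; push_cast; ring
  have hdist : ρ₁ < dist (z2s m) z₁ := by
    rw [hp, dist_eq, add_sub_cancel_left, norm_mul, norm_real, Real.norm_eq_abs, norm_sub_rev,
      ← hρ, abs_of_pos hlpos, ← div_lt_iff₀ hρpos]
    exact hl
  have hinv : inversion z₁ ρ₁ (z2s m) = z1s (m + 1) := by
    rw [hp, inversion_add_mul_sub _ _ _ hlpos.ne', hz1s, hl₂, hΛ₁, norm_sub_rev, ← hρ]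
    push_cast
    ring
  have hκ : κ₂ (m + 1 + 1) = -conj (κ₁ (m + 1)) * (ρ₁ : ℂ) ^ 2 / conj (z2s m - z₁) ^ 2 := by
    rw [kappa₂_add_two_eq_conj_kappa₁ hρ hΛ₁ hΛ₂ hl₁0 hl₂0 hκ₁1 hκ₁2 hκ₁rec hκ₂1 hκ₂2 hκ₂rec m,
      hp, add_sub_cancel_left, map_mul, conj_ofReal]
  have hF' : DifferentiableOn ℂ (deriv F) (closedBall z₁ ρ₁) :=
    (hF.analyticOnNhd hU).deriv.differentiableOn.mono hUb
  rw [circleIntegral.integral_congr hρ₁.le fun z _ => by rw [hq₁ (m + 1) (by omega),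
    Nat.add_sub_cancel], circleIntegral_conj_div_sub_add_mul hρ₁ hdist hF', hinv, hκ]

theorem conj_density_circle_integral
    (z₁ z₂ : ℂ) (hz : z₁ ≠ z₂) (ρ ρ₁ ρ₂ : ℝ)
    (hρ : ρ = ‖z₁ - z₂‖)
    (hρ₁ : 0 < ρ₁) (hρ₂ : 0 < ρ₂) (hsum : ρ₁ + ρ₂ < ρ)
    (Λ₁ Λ₂ Λ : ℝ) (hΛ₁ : Λ₁ = (ρ₁ / ρ) ^ 2) (hΛ₂ : Λ₂ = (ρ₂ / ρ) ^ 2)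
    (hΛ : Λ = (Λ₁ - Λ₂) ^ 2 + 1 - 2 * (Λ₁ + Λ₂))
    (l₁ l₂ : ℕ → ℝ) (hl₁0 : l₁ 0 = 1) (hl₂0 : l₂ 0 = 1)
    (hl₁ : ∀ n : ℕ, l₁ (n + 1) = 1 - Λ₂ / l₂ n)
    (hl₂ : ∀ n : ℕ, l₂ (n + 1) = 1 - Λ₁ / l₁ n)
    (κ₁ κ₂ : ℕ → ℂ)
    (hκ₁1 : κ₁ 1 = ((2 * ρ₂ ^ 2 : ℝ) : ℂ))
    (hκ₁2 : κ₁ 2 = -(2 * (((ρ₁ * ρ₂ : ℝ)) : ℂ) ^ 2) / (starRingEnd ℂ (z₂ - z₁)) ^ 2)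
    (hκ₁rec : ∀ n : ℕ, 1 ≤ n →
      κ₁ (n + 2) = ((Λ₁ * Λ₂ / (l₂ n * l₁ (n - 1)) ^ 2 : ℝ) : ℂ) * κ₁ n)
    (hκ₂1 : κ₂ 1 = ((2 * ρ₁ ^ 2 : ℝ) : ℂ))
    (hκ₂2 : κ₂ 2 = -(2 * (((ρ₁ * ρ₂ : ℝ)) : ℂ) ^ 2) / (starRingEnd ℂ (z₁ - z₂)) ^ 2)
    (hκ₂rec : ∀ n : ℕ, 1 ≤ n →
      κ₂ (n + 2) = ((Λ₁ * Λ₂ / (l₁ n * l₂ (n - 1)) ^ 2 : ℝ) : ℂ) * κ₂ n)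
    (z1s z2s : ℕ → ℂ)
    (hz1s : ∀ n : ℕ, z1s n = ((1 - l₂ n : ℝ) : ℂ) * z₂ + ((l₂ n : ℝ) : ℂ) * z₁)
    (hz2s : ∀ n : ℕ, z2s n = ((1 - l₁ n : ℝ) : ℂ) * z₁ + ((l₁ n : ℝ) : ℂ) * z₂)
    (α₁ : ℕ → ℂ)
    (hα₁ : ∀ n : ℕ, 1 ≤ n →
      α₁ n = -κ₁ n / (2 * ((l₁ (n - 1) : ℝ) : ℂ) * (z₁ - z₂)))
    (q₁ : ℕ → ℂ → ℂ)
    (hq₁0 : ∀ z : ℂ, q₁ 0 z = 2 * (z - z₁))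
    (hq₁ : ∀ n : ℕ, 1 ≤ n → ∀ z : ℂ, q₁ n z = κ₁ n / (z - z2s (n - 1)) + α₁ n)
    (F : ℂ → ℂ) (U : Set ℂ) (hU : IsOpen U)
    (hUb : Metric.closedBall z₁ ρ₁ ⊆ U) (hF : DifferentiableOn ℂ F U) :
    ∀ n : ℕ, 1 ≤ n →
      (∮ z in C(z₁, ρ₁), starRingEnd ℂ (q₁ n z) * deriv F z) =
        2 * (Real.pi : ℂ) * Complex.I * κ₂ (n + 1) * deriv F (z1s n) :=
  conj_density_circle_integral_general z₁ z₂ ρ ρ₁ ρ₂ hρ hρ₁ hρ₂ hsum Λ₁ Λ₂ hΛ₁ hΛ₂ l₁ l₂ hl₁0 hl₂0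
    hl₁ hl₂ κ₁ κ₂ hκ₁1 hκ₁2 hκ₁rec hκ₂1 hκ₂2 hκ₂rec z1s z2s hz1s hz2s α₁ q₁ hq₁ F U hU hUb hF
end

section
/- Suppose the pair ((z_i), (c_i)) solves Prony's system τ_m = Σ_{i=1}^n c_i z_i^m for m = 0, …, 2n−1, where the z_i are pairwise distinct and the c_i are nonzero. Then each z_k is a generalized eigenvalue of the Hankel pencil (H₁, H₀): for every k ∈ {1,…,n} there exists a nonzero vector x ∈ ℂⁿ with H₁ x = z_k H₀ x. Moreover H₀ = V D V^T and H₁ = V (D Z) V^T, where V is the n×n Vandermonde matrix with entries V_{ij} = z_j^{i−1}, D = diag(c₁,…,c_n) and Z = diag(z₁,…,z_n). -/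
theorem prony_hankel_pencil
    (n : ℕ) (hn : 1 ≤ n) (z c : Fin n → ℂ)
    (hz : Function.Injective z) (hc : ∀ i, c i ≠ 0)
    (τ : ℕ → ℂ) (hτ : ∀ m : ℕ, m < 2 * n → τ m = ∑ i, c i * z i ^ m)
    (H₀ H₁ V : Matrix (Fin n) (Fin n) ℂ)
    (hH₀ : ∀ i j : Fin n, H₀ i j = τ ((i : ℕ) + (j : ℕ)))
    (hH₁ : ∀ i j : Fin n, H₁ i j = τ ((i : ℕ) + (j : ℕ) + 1))
    (hV : ∀ i j : Fin n, V i j = z j ^ (i : ℕ)) :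
    (∀ k : Fin n, ∃ x : Fin n → ℂ, x ≠ 0 ∧ H₁.mulVec x = z k • H₀.mulVec x) ∧
    H₀ = V * Matrix.diagonal c * V.transpose ∧
    H₁ = V * (Matrix.diagonal c * Matrix.diagonal z) * V.transpose := by
  have h0 : H₀ = V * Matrix.diagonal c * V.transpose := by
    ext i j
    have hij : (i : ℕ) + (j : ℕ) < 2 * n := by
      have := i.isLt; have := j.isLt; omega
    rw [hH₀, hτ _ hij, Matrix.mul_apply]
    simp only [Matrix.mul_diagonal, Matrix.transpose_apply, hV]
    apply Finset.sum_congr rfl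
    intro l _
    rw [pow_add]; ring
  have h1 : H₁ = V * (Matrix.diagonal c * Matrix.diagonal z) * V.transpose := by
    ext i j
    have hij : (i : ℕ) + (j : ℕ) + 1 < 2 * n := by
      have := i.isLt; have := j.isLt; omega
    rw [hH₁, hτ _ hij, Matrix.diagonal_mul_diagonal, Matrix.mul_apply]
    simp only [Matrix.mul_diagonal, Matrix.transpose_apply, hV]
    apply Finset.sum_congr rfl
    intro l _
    rw [pow_add, pow_add, pow_one]; ring
  refine ⟨?_, h0, h1⟩
  intro k
  have hdet : V.transpose.det ≠ 0 := by
    have hVv : V.transpose = Matrix.vandermonde z := by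
      ext i j; simp [Matrix.transpose_apply, hV, Matrix.vandermonde]
    rw [hVv, Matrix.det_vandermonde]
    apply Finset.prod_ne_zero_iff.mpr
    intro i _
    apply Finset.prod_ne_zero_iff.mpr
    intro j hj
    rw [Finset.mem_Ioi] at hj
    exact sub_ne_zero.mpr fun h => absurd (hz h.symm) (Fin.ne_of_lt hj)
  have hunit : IsUnit V.transpose.det := isUnit_iff_ne_zero.mpr hdet
  set e : Fin n → ℂ := Pi.single k 1 with he
  set x : Fin n → ℂ := (V.transpose)⁻¹.mulVec e with hx
  have hVx : V.transpose.mulVec x = e := by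
    rw [hx, Matrix.mulVec_mulVec, Matrix.mul_nonsing_inv _ hunit, Matrix.one_mulVec]
  refine ⟨x, ?_, ?_⟩
  · intro h
    have h2 : V.transpose.mulVec x = 0 := by rw [h, Matrix.mulVec_zero]
    rw [hVx] at h2
    have := congrFun h2 k
    simp [he] at this
  · have hH1x : H₁.mulVec x =
        V.mulVec ((Matrix.diagonal c * Matrix.diagonal z).mulVec e) := by
      rw [h1, Matrix.mul_assoc, ← Matrix.mulVec_mulVec, ← Matrix.mulVec_mulVec, hVx]
    have hH0x : H₀.mulVec x = V.mulVec ((Matrix.diagonal c).mulVec e) := by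
      rw [h0, Matrix.mul_assoc, ← Matrix.mulVec_mulVec, ← Matrix.mulVec_mulVec, hVx]
    have hinner : (Matrix.diagonal c * Matrix.diagonal z).mulVec e =
        z k • (Matrix.diagonal c).mulVec e := by
      funext i
      rw [Matrix.diagonal_mul_diagonal, Matrix.mulVec_diagonal, Pi.smul_apply,
        Matrix.mulVec_diagonal]
      rcases eq_or_ne i k with rfl | h
      · simp [he, Pi.single_apply]; ring
      · simp [he, Pi.single_apply, h]
    rw [hH1x, hH0x, hinner, Matrix.mulVec_smul]
end
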